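/- arXiv:2602.08176 — 4 statements merged into one kernel-verified Lean document; each statement's English description precedes it below -/
import Mathlib

section
/- For all u, v ∈ 𝔥^{≥2}, the element R(u,v) = φ(u*v) − φ(u)*v − u*φ(v) lies in 𝔥^{≥2}, i.e. it is a ℚ-linear combination of words z_{k₁}⋯z_{k_r} with all k_i ≥ 2. -/
open scoped Classical BigOperators

noncomputable section

/-- The underlying space of `𝔥¹ = ℚ⟨z₁, z₂, …⟩`: formal ℚ-linear combinations of words,
a word being encoded by the list of subscripts `[k₁, …, k_r]` of `z_{k₁} ⋯ z_{k_r}`. -/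
abbrev H : Type := List ℕ →₀ ℚ

/-- The space of ℚ-linear combinations of words in the two letters `x` (= `false`)
and `y` (= `true`). -/
abbrev Bw : Type := List Bool →₀ ℚ

/-- The word `z_{k₁} ⋯ z_{k_r}` as an element of `H`. -/
def zw (l : List ℕ) : H := Finsupp.single l 1

/-- Membership in `𝔥¹` (all subscripts ≥ 1). -/
def isH1 (w : H) : Prop := ∀ l ∈ w.support, ∀ k ∈ l, 1 ≤ k

/-- Membership in `𝔥^{≥2}` (all subscripts ≥ 2). -/
def isH2 (w : H) : Prop := ∀ l ∈ w.support, ∀ k ∈ l, 2 ≤ k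

/-- Membership in `𝔥⁰` (first subscript ≥ 2, all others ≥ 1). -/
def isH0 (w : H) : Prop :=
  ∀ l ∈ w.support, (∀ k ∈ l, 1 ≤ k) ∧ ∀ k, l.head? = some k → 2 ≤ k

/-- The harmonic product on words. -/
def hmulW : List ℕ → List ℕ → H
  | [], v => Finsupp.single v 1
  | k :: u, [] => Finsupp.single (k :: u) 1
  | k :: u, l :: v =>
      Finsupp.mapDomain (k :: ·) (hmulW u (l :: v)) +
      Finsupp.mapDomain (l :: ·) (hmulW (k :: u) v) +
      Finsupp.mapDomain ((k + l) :: ·) (hmulW u v)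
  termination_by u v => u.length + v.length

/-- The harmonic product `*` on `𝔥¹`. -/
def hmul (u v : H) : H := u.sum fun a ca => v.sum fun b cb => (ca * cb) • hmulW a b

/-- The shuffle product on words in the letters `x, y`. -/
def shW : List Bool → List Bool → Bw
  | [], v => Finsupp.single v 1
  | a :: u, [] => Finsupp.single (a :: u) 1
  | a :: u, b :: v =>
      Finsupp.mapDomain (a :: ·) (shW u (b :: v)) +
      Finsupp.mapDomain (b :: ·) (shW (a :: u) v)
  termination_by u v => u.length + v.length

/-- The identification `z_k = x^{k-1} y`. -/
def toXY (l : List ℕ) : List Bool :=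
  (l.map fun k => List.replicate (k - 1) false ++ [true]).flatten

def fromXYAux : List Bool → ℕ → List ℕ
  | [], _ => []
  | false :: t, c => fromXYAux t (c + 1)
  | true :: t, c => (c + 1) :: fromXYAux t 0

/-- Parse a word in `x, y` (ending in `y`) back into a word `z_{k₁} ⋯ z_{k_r}`. -/
def fromXY (l : List Bool) : List ℕ := fromXYAux l 0

def shmulW (a b : List ℕ) : H := Finsupp.mapDomain fromXY (shW (toXY a) (toXY b))

/-- The shuffle product `⧢` on `𝔥¹` (via the identification `z_k = x^{k-1}y`). -/
def shmul (u v : H) : H := u.sum fun a ca => v.sum fun b cb => (ca * cb) • shmulW a b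

/-- `φ(w) = w * z₂ − w ⧢ z₂`. -/
def phi (w : H) : H := hmul w (zw [2]) - shmul w (zw [2])

/-- `R(u,v) = φ(u*v) − φ(u)*v − u*φ(v)`. -/
def Rop (u v : H) : H := phi (hmul u v) - hmul (phi u) v - hmul u (phi v)

/-- The weight operator `W`. -/
def Wop (w : H) : H := w.sum fun a c => Finsupp.single a (c * (a.sum : ℚ))

/-- `Σ_{w = u'(p)u''} u' y u''`: replace one occurrence of the factor `p` by `y`. -/
def replaceOcc (p : List Bool) : List Bool → Bw
  | [] => 0
  | a :: t =>
      (if p.isPrefixOf (a :: t) then Finsupp.single (true :: (a :: t).drop p.length) 1 else 0) +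
      Finsupp.mapDomain (a :: ·) (replaceOcc p t)

/-- The map `δ` on words in the letters `x, y`. -/
def deltaB (l : List Bool) : Bw :=
  (if l.take 2 = [true, false] then (1/2 : ℚ) • Finsupp.single (l.drop 2) 1 else 0) -
  (if l.take 2 = [false, true] then (1/2 : ℚ) • Finsupp.single (l.drop 2) 1 else 0) +
  (if l.take 2 = [true, true] then (1/4 : ℚ) • Finsupp.single (l.drop 2) 1 else 0) +
  (1/2 : ℚ) • (replaceOcc [true, true, false] l - replaceOcc [false, true, true] l)

/-- The map `δ : 𝔥¹ → 𝔥¹`. -/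
def deltaH (w : H) : H := w.sum fun a c => c • Finsupp.mapDomain fromXY (deltaB (toXY a))

/-- The recursively defined map `𝔇` on tuples, with an explicit fuel parameter.
(The fuel `c.sum + 1` is always sufficient, since the total sum of the entries strictly
decreases in each recursive call.) -/
def Dfuel : ℕ → List ℕ → Bw
  | _, [] => Finsupp.single [] 1
  | 0, _ :: _ => 0
  | fuel + 1, k :: t =>
      let c := k :: t
      let n := c.length
      let ones : Finset ℕ := (Finset.Icc 1 n).filter fun i => c.getD (i - 1) 0 = 1
      let bigs : Finset ℕ := (Finset.Icc 1 n).filter fun i => 1 < c.getD (i - 1) 0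
      let evenOdd : Finset ℕ → Prop := fun A =>
        ∀ i ∈ A, (Even i → i + 1 ∈ A) ∧ (Odd i → i - 1 ∈ A)
      let oddEven : Finset ℕ → Prop := fun A =>
        ∀ i ∈ A, (Odd i → i + 1 ∈ A) ∧ (Even i → i - 1 ∈ A)
      let noEvenPair : Finset ℕ → Prop := fun B' =>
        ∀ l : ℕ, 1 ≤ l → ¬(2 * l ∈ B' ∧ 2 * l + 1 ∈ B')
      let noOddPair : Finset ℕ → Prop := fun B' =>
        ∀ l : ℕ, 1 ≤ l → ¬(2 * l - 1 ∈ B' ∧ 2 * l ∈ B')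
      let newc : Finset ℕ → Finset ℕ → List ℕ := fun A B' =>
        (List.range n).filterMap fun j =>
          if j + 1 ∈ A then none
          else some (c.getD j 0 - if j + 1 ∈ B' then 1 else 0)
      (∑ A ∈ ones.powerset.filter evenOdd,
        ∑ B' ∈ bigs.powerset.filter (fun B' => 1 ≤ A.card + B'.card ∧ noEvenPair B'),
          ((-1 : ℚ) ^ (B'.card + 1)) •
            Finsupp.mapDomain (fun w => List.replicate (A.card + B'.card) false ++ w)
              (Dfuel fuel (newc A B'))) +
      (∑ A ∈ ones.powerset.filter evenOdd,
        ∑ B' ∈ bigs.powerset.filter (fun B' => 2 ≤ A.card + B'.card ∧ noEvenPair B'),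
          ((-1 : ℚ) ^ (B'.card + 1)) •
            Finsupp.mapDomain
              (fun w => List.replicate (A.card + B'.card - 1) false ++ true :: w)
              (Dfuel fuel (newc A B'))) +
      (∑ A ∈ ones.powerset.filter oddEven,
        ∑ B' ∈ bigs.powerset.filter (fun B' => 2 ≤ A.card + B'.card ∧ noOddPair B'),
          ((-1 : ℚ) ^ B'.card) •
            Finsupp.mapDomain
              (fun w => List.replicate (A.card + B'.card - 1) false ++ true :: w)
              (Dfuel fuel (newc A B')))

/-- The map `𝔇` on tuples of positive integers. -/
def DropD (c : List ℕ) : Bw := Dfuel (c.sum + 1) c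

/-- Run-length encoding of a word in `x, y`: the exponents `(c₁, …, c_{2s})` of
`x^{c₁} y^{c₂} ⋯ x^{c_{2s-1}} y^{c_{2s}}`. -/
def rle : List Bool → List ℕ
  | [] => []
  | a :: t => ((t.takeWhile (· = a)).length + 1) :: rle (t.dropWhile (· = a))
  termination_by l => l.length
  decreasing_by
    simp only [List.length_cons]
    exact Nat.lt_succ_of_le (List.Sublist.length_le (List.dropWhile_sublist _))

def Drop1W (a : List ℕ) : H := Finsupp.mapDomain fromXY (DropD (rle (toXY a)))

/-- The Drop1 operator `𝒟 : 𝔥⁰ → 𝔥^{≥2}` of Hirose–Maesaka–Seki–Watanabe. -/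
def Drop1 (w : H) : H := w.sum fun a c => c • Drop1W a

/-- The map `der = −𝒟 ∘ φ`, i.e. `der(w) = 𝒟(w ⧢ z₂ − w * z₂)`. -/
def der (w : H) : H := Drop1 (shmul w (zw [2]) - hmul w (zw [2]))

/-- The ideal `DR_*` of `(𝔥^{≥2}, *)` spanned by the `der^n(R(u,v)) * w`. -/
def DRstar : Submodule ℚ H :=
  Submodule.span ℚ {x | ∃ (n : ℕ) (u v w : H), isH2 u ∧ isH2 v ∧ isH2 w ∧
    x = hmul (der^[n] (Rop u v)) w}

/-- The lexicographic order `≻` on the lattice `ℤτ + ℤ`. -/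
def lexGT (a b : ℤ × ℤ) : Prop := b.1 < a.1 ∨ (a.1 = b.1 ∧ b.2 < a.2)

/-- The lattice point `mτ + n`. -/
def lat (τ : ℂ) (p : ℤ × ℤ) : ℂ := p.1 * τ + p.2

/-- The finite partial sum `S_{M,N}(k₁,…,k_r; τ)` of the multiple Eisenstein series. -/
def SMN (k : List ℕ) (M N : ℕ) (τ : ℂ) : ℂ :=
  ∑ f ∈ (Fintype.piFinset fun _ : Fin k.length =>
      (Finset.Ioo (-(M : ℤ)) (M : ℤ)) ×ˢ (Finset.Ioo (-(N : ℤ)) (N : ℤ))).filter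
      (fun f => ∀ i : Fin k.length,
        lexGT (f i) (if h : (i : ℕ) + 1 < k.length then f ⟨(i : ℕ) + 1, h⟩ else (0, 0))),
    ∏ i : Fin k.length, (lat τ (f i)) ^ (-(k.get i : ℤ))

/-- The finite partial sums of the `g`-part: only lattice points with positive
imaginary part. -/
def gSMN (k : List ℕ) (M N : ℕ) (τ : ℂ) : ℂ :=
  ∑ f ∈ (Fintype.piFinset fun _ : Fin k.length =>
      (Finset.Ioo (-(M : ℤ)) (M : ℤ)) ×ˢ (Finset.Ioo (-(N : ℤ)) (N : ℤ))).filter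
      (fun f => (∀ i : Fin k.length,
        lexGT (f i) (if h : (i : ℕ) + 1 < k.length then f ⟨(i : ℕ) + 1, h⟩ else (0, 0))) ∧
        ∀ i : Fin k.length, 0 < (lat τ (f i)).im),
    ∏ i : Fin k.length, (lat τ (f i)) ^ (-(k.get i : ℤ))

/-- The multiple zeta value `ζ(k₁,…,k_r)` as an (unconditional) sum. -/
def zetaValue (k : List ℕ) : ℂ :=
  ∑' n : Fin k.length → ℕ,
    if ∀ i : Fin k.length,
        (if h : (i : ℕ) + 1 < k.length then n ⟨(i : ℕ) + 1, h⟩ else 0) < n i then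
      ∏ i : Fin k.length, (n i : ℂ) ^ (-(k.get i : ℤ))
    else 0

section Quasi

variable {R : Type*} [CommRing R] [Algebra ℚ R]

/-- `F_w(M) = Σ_{w = w₁⋯w_s} Σ_{M > m₁ > ⋯ > m_s > 0} f_{w₁}(m₁)⋯f_{w_s}(m_s)` on words. -/
def Fword (f : ℕ → H →ₗ[ℚ] R) (M : ℕ) (l : List ℕ) : R :=
  if l = [] then 1
  else ∑ c : Composition l.length,
    ∑ m ∈ (Fintype.piFinset fun _ : Fin c.length => Finset.Ioo 0 M).filter
        (fun m => StrictAnti m),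
      ∏ i : Fin c.length, f (m i) (zw ((l.splitWrtComposition c).getD (i : ℕ) []))

/-- The ℚ-linear extension of `Fword`. -/
def FL (f : ℕ → H →ₗ[ℚ] R) (M : ℕ) (w : H) : R := w.sum fun l c => c • Fword f M l

/-- `μ^{m₁,…,m_r} = 1/(r₁!⋯r_s!)` where `r₁,…,r_s` are the multiplicities of the
distinct values of `m`. -/
def muCoeff {s : ℕ} (m : Fin s → ℕ) : ℚ :=
  (∏ v ∈ Finset.image m Finset.univ,
    ((Finset.univ.filter fun i => m i = v).card.factorial : ℚ))⁻¹

/-- `coF(M)` on words: supported on powers of `z₁`. -/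
def coFword (a : ℕ → R) (M : ℕ) (l : List ℕ) : R :=
  if ∀ k ∈ l, k = 1 then
    (-1 : R) ^ l.length *
      ∑ m ∈ (Fintype.piFinset fun _ : Fin l.length => Finset.Ioo 0 M).filter
          (fun m => Antitone m),
        muCoeff m • ∏ i : Fin l.length, a (m i)
  else 0

/-- The ℚ-linear extension of `coFword`. -/
def coFL (a : ℕ → R) (M : ℕ) (w : H) : R := w.sum fun l c => c • coFword a M l

/-- `F^*(M)`: the deconcatenation convolution of `coF(M)` and `F(M)` on words. -/
def FstarWord (f : ℕ → H →ₗ[ℚ] R) (M : ℕ) (l : List ℕ) : R :=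
  ∑ i ∈ Finset.range (l.length + 1),
    coFword (fun m => f m (zw [1])) M (l.take i) * Fword f M (l.drop i)

/-- The ℚ-linear extension of `FstarWord`. -/
def FstarL (f : ℕ → H →ₗ[ℚ] R) (M : ℕ) (w : H) : R := w.sum fun l c => c • FstarWord f M l

end Quasi

/-- Parse a word `b_{k₁}b₀^{m₁} ⋯ b_{k_r}b₀^{m_r}` (a list over ℕ, with `0` playing the
role of `b₀`) into the list of pairs `(k₁,m₁), …, (k_r,m_r)`. -/
def toPairs : List ℕ → List (ℕ × ℕ)
  | [] => []
  | k :: t => (k, (t.takeWhile (· = 0)).length) :: toPairs (t.dropWhile (· = 0))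
  termination_by l => l.length
  decreasing_by
    simp only [List.length_cons]
    exact Nat.lt_succ_of_le (List.Sublist.length_le (List.dropWhile_sublist _))

def ofPairs (P : List (ℕ × ℕ)) : List ℕ :=
  (P.map fun p => p.1 :: List.replicate p.2 0).flatten

/-- The involution `τ_b` on words of `ℚ⟨ℬ⟩⁰`. -/
def taubW (l : List ℕ) : List ℕ :=
  ofPairs (((toPairs l).map fun p => (p.2 + 1, p.1 - 1)).reverse)

/-- The ℚ-linear involution `τ_b` on `ℚ⟨ℬ⟩⁰`. -/
def taub (w : H) : H := w.sum fun a c => c • (Finsupp.single (taubW a) 1 : H)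

/-- The balanced harmonic product `*_b` on words of `ℚ⟨ℬ⟩⁰`. -/
def hbW : List ℕ → List ℕ → H
  | [], v => Finsupp.single v 1
  | i :: u, [] => Finsupp.single (i :: u) 1
  | i :: u, j :: v =>
      Finsupp.mapDomain (i :: ·) (hbW u (j :: v)) +
      Finsupp.mapDomain (j :: ·) (hbW (i :: u) v) +
      (if i ≠ 0 ∧ j ≠ 0 then Finsupp.mapDomain ((i + j) :: ·) (hbW u v) else 0)
  termination_by u v => u.length + v.length

/-- The balanced harmonic product `*_b`. -/
def hb (u v : H) : H := u.sum fun a ca => v.sum fun b cb => (ca * cb) • hbW a b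

/-- The derivation `D` of `ℚ⟨ℬ⟩⁰`:
`D(b_{k₁}b₀^{m₁}⋯b_{k_r}b₀^{m_r}) = Σ_{1≤i≤j≤r} k_i(m_j+1)·(word with k_i, m_j increased)`. -/
def Dbal (w : H) : H :=
  w.sum fun a c =>
    let P := toPairs a
    ∑ i ∈ Finset.range P.length, ∑ j ∈ Finset.Ico i P.length,
      (c * (P.getD i (0, 0)).1 * ((P.getD j (0, 0)).2 + 1)) •
        (Finsupp.single (ofPairs (P.mapIdx fun t p =>
          ((if t = i then p.1 + 1 else p.1), (if t = j then p.2 + 1 else p.2)))) 1 : H)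


/-! ### Auxiliary development for stmt0 -/

namespace Stmt0Aux

open Finsupp

/-- The submodule `𝔥^{≥2}`. -/
def H2S : Submodule ℚ H where
  carrier := {w | ∀ l ∈ w.support, ∀ k ∈ l, 2 ≤ k}
  add_mem' := by
    intro a b ha hb l hl
    rcases Finset.mem_union.1 (Finsupp.support_add hl) with h | h
    · exact ha l h
    · exact hb l h
  zero_mem' := by intro l hl; simp at hl
  smul_mem' := by
    intro c a ha l hl
    exact ha l (Finsupp.support_smul hl)

lemma isH2_iff {w : H} : isH2 w ↔ w ∈ H2S := Iff.rfl

lemma zw_mem {l : List ℕ} (hl : ∀ k ∈ l, 2 ≤ k) : zw l ∈ H2S := by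
  intro l' hl' k hk
  rw [zw] at hl'
  have := Finsupp.support_single_subset hl'
  simp at this
  subst this
  exact hl k hk

/-- Prepending `z_k`, as a linear map. -/
def Cns (k : ℕ) : H →ₗ[ℚ] H := Finsupp.lmapDomain ℚ ℚ (k :: ·)

lemma Cns_apply (k : ℕ) (X : H) : Cns k X = Finsupp.mapDomain (k :: ·) X := rfl

lemma Cns_single (k : ℕ) (l : List ℕ) (c : ℚ) :
    Cns k (Finsupp.single l c) = Finsupp.single (k :: l) c := by
  simp [Cns_apply, Finsupp.mapDomain_single]

lemma cns_mem {k : ℕ} (hk : 2 ≤ k) {X : H} (hX : X ∈ H2S) : Cns k X ∈ H2S := by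
  intro l hl m hm
  rw [Cns_apply] at hl
  have := Finsupp.mapDomain_support hl
  simp only [Finset.mem_image] at this
  obtain ⟨l', hl', rfl⟩ := this
  rcases List.mem_cons.1 hm with rfl | hm'
  · exact hk
  · exact hX l' hl' m hm'

/-- Linear extension of a word-indexed family. -/
def lift (f : List ℕ → H) : H →ₗ[ℚ] H :=
  Finsupp.lsum ℚ fun a => LinearMap.toSpanSingleton ℚ H (f a)

lemma lift_single (f : List ℕ → H) (a : List ℕ) (c : ℚ) :
    lift f (Finsupp.single a c) = c • f a := by
  simp [lift]

lemma mem_of_forall_single (T : H →ₗ[ℚ] H)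
    (h : ∀ a : List ℕ, (∀ k ∈ a, 2 ≤ k) → T (zw a) ∈ H2S) {w : H} (hw : w ∈ H2S) :
    T w ∈ H2S := by
  have hrep : w = ∑ l ∈ w.support, Finsupp.single l (w l) := by
    exact (Finsupp.sum_single w).symm
  rw [hrep, map_sum]
  refine Submodule.sum_mem _ fun l hl => ?_
  have : Finsupp.single l (w l) = (w l) • zw l := by
    rw [zw, Finsupp.smul_single, smul_eq_mul, mul_one]
  rw [this, map_smul]
  exact Submodule.smul_mem _ _ (h l (hw l hl))

/-- The harmonic product as a bilinear map. -/
def hm : H →ₗ[ℚ] H →ₗ[ℚ] H :=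
  Finsupp.lsum ℚ fun a => LinearMap.toSpanSingleton ℚ (H →ₗ[ℚ] H) (lift (hmulW a))

lemma hm_single (a : List ℕ) (c : ℚ) :
    hm (Finsupp.single a c) = c • lift (hmulW a) := by
  unfold hm
  rw [Finsupp.lsum_single, LinearMap.toSpanSingleton_apply]

lemma hm_single_single (a b : List ℕ) (c d : ℚ) :
    hm (Finsupp.single a c) (Finsupp.single b d) = (c * d) • hmulW a b := by
  rw [hm_single, LinearMap.smul_apply, lift_single, smul_smul]

lemma hm_zw_zw (a b : List ℕ) : hm (zw a) (zw b) = hmulW a b := by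
  rw [zw, zw, hm_single_single]; simp

lemma hmul_eq_hm (u v : H) : hmul u v = hm u v := by
  unfold hm hmul
  rw [Finsupp.lsum_apply]
  have : (u.sum fun b => ⇑(LinearMap.toSpanSingleton ℚ (H →ₗ[ℚ] H) (lift (hmulW b)))) =
      ∑ a ∈ u.support, (u a) • lift (hmulW a) := by
    refine Finset.sum_congr rfl fun a _ => ?_
    simp only [LinearMap.toSpanSingleton_apply]
  rw [this, LinearMap.sum_apply]
  refine Finset.sum_congr rfl fun a _ => ?_
  rw [LinearMap.smul_apply]
  rw [lift, Finsupp.lsum_apply, Finsupp.smul_sum]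
  refine Finsupp.sum_congr fun b _ => ?_
  rw [LinearMap.toSpanSingleton_apply, smul_smul]

lemma hmulW_nil_left (v : List ℕ) : hmulW [] v = Finsupp.single v 1 := by
  cases v <;> rw [hmulW]

lemma hmulW_nil_right (u : List ℕ) : hmulW u [] = Finsupp.single u 1 := by
  cases u <;> rw [hmulW]

lemma hmulW_cons_cons (k l : ℕ) (u v : List ℕ) :
    hmulW (k :: u) (l :: v) =
      Cns k (hmulW u (l :: v)) + Cns l (hmulW (k :: u) v) + Cns (k + l) (hmulW u v) := by
  rw [hmulW]; rfl

lemma hm_one_left (X : H) : hm (zw []) X = X := by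
  induction X using Finsupp.induction_linear with
  | zero => simp
  | add f g hf hg => rw [map_add, hf, hg]
  | single a b =>
    rw [zw, hm_single_single, hmulW_nil_left, one_mul, Finsupp.smul_single, smul_eq_mul, mul_one]

lemma hm_one_right (X : H) : hm X (zw []) = X := by
  induction X using Finsupp.induction_linear with
  | zero => simp
  | add f g hf hg => rw [map_add, LinearMap.add_apply, hf, hg]
  | single a b =>
    rw [zw, hm_single_single, hmulW_nil_right, mul_one, Finsupp.smul_single, smul_eq_mul, mul_one]

/-- The fundamental recursion for the harmonic product, in linear form. -/
lemma hm_cons (k l : ℕ) (X Y : H) :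
    hm (Cns k X) (Cns l Y) =
      Cns k (hm X (Cns l Y)) + Cns l (hm (Cns k X) Y) + Cns (k + l) (hm X Y) := by
  induction X using Finsupp.induction_linear with
  | zero => simp
  | add f g hf hg =>
    simp only [map_add, LinearMap.add_apply, hf, hg]
    abel
  | single a c =>
    induction Y using Finsupp.induction_linear with
    | zero => simp
    | add f g hf hg =>
      simp only [map_add, LinearMap.add_apply, hf, hg]
      abel
    | single b d =>
      rw [Cns_single, Cns_single, hm_single_single, hmulW_cons_cons, hm_single_single,
        hm_single_single, hm_single_single]
      simp only [map_smul, smul_add]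

lemma hmulW_mem {a : List ℕ} (ha : ∀ k ∈ a, 2 ≤ k) {b : List ℕ} (hb : ∀ k ∈ b, 2 ≤ k) :
    hmulW a b ∈ H2S := by
  induction a generalizing b with
  | nil => rw [hmulW_nil_left]; exact zw_mem hb
  | cons k u ihu =>
    induction b with
    | nil => rw [hmulW_nil_right]; exact zw_mem ha
    | cons l v ihv =>
      have hk := ha k (List.mem_cons_self)
      have hl := hb l (List.mem_cons_self)
      have hu : ∀ m ∈ u, 2 ≤ m := fun m hm => ha m (List.mem_cons_of_mem _ hm)
      have hv : ∀ m ∈ v, 2 ≤ m := fun m hm => hb m (List.mem_cons_of_mem _ hm)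
      rw [hmulW_cons_cons]
      exact Submodule.add_mem _
        (Submodule.add_mem _ (cns_mem hk (ihu hu hb)) (cns_mem hl (ihv hv)))
        (cns_mem (le_trans hk (Nat.le_add_right _ _)) (ihu hu hv))

lemma hm_mem {X Y : H} (hX : X ∈ H2S) (hY : Y ∈ H2S) : hm X Y ∈ H2S := by
  refine mem_of_forall_single (hm.flip Y) ?_ hX
  intro a ha
  rw [LinearMap.flip_apply]
  refine mem_of_forall_single (hm (zw a)) ?_ hY
  intro b hb
  rw [hm_zw_zw]
  exact hmulW_mem ha hb

/-! ### The operators σ, β, plus -/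

/-- `σ(w)`: insert `z₁` into each gap of `w` (including front and back). -/
def sigw : List ℕ → H
  | [] => zw [1]
  | k :: U => zw (1 :: k :: U) + Cns k (sigw U)

/-- `plus(w)`: sum over incrementing one entry. -/
def plusw : List ℕ → H
  | [] => 0
  | k :: U => zw ((k + 1) :: U) + Cns k (plusw U)

/-- `β(w) = Σ_{j≤i} k_j · (w with k_j↦k_j+1 and z₁ inserted after position i)`. -/
def betw : List ℕ → H
  | [] => 0
  | k :: U => (k : ℚ) • Cns (k + 1) (sigw U) + Cns k (betw U)

def σH : H →ₗ[ℚ] H := lift sigw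
def βH : H →ₗ[ℚ] H := lift betw

lemma lift_zw (f : List ℕ → H) (a : List ℕ) : lift f (zw a) = f a := by
  rw [zw, lift_single, one_smul]

lemma zw_cons (k : ℕ) (l : List ℕ) : zw (k :: l) = Cns k (zw l) := by
  rw [zw, zw, Cns_single]

lemma sigw_cons (k : ℕ) (U : List ℕ) : sigw (k :: U) = zw (1 :: k :: U) + Cns k (sigw U) := rfl
lemma betw_cons (k : ℕ) (U : List ℕ) :
    betw (k :: U) = (k : ℚ) • Cns (k + 1) (sigw U) + Cns k (betw U) := rfl

lemma σH_zw (a : List ℕ) : σH (zw a) = sigw a := lift_zw _ _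
lemma βH_zw (a : List ℕ) : βH (zw a) = betw a := lift_zw _ _

lemma σH_cns (k : ℕ) (X : H) : σH (Cns k X) = Cns 1 (Cns k X) + Cns k (σH X) := by
  induction X using Finsupp.induction_linear with
  | zero => simp
  | add f g hf hg => simp only [map_add, hf, hg]; abel
  | single a c =>
    rw [Cns_single, Cns_single, σH, lift_single, lift_single, sigw_cons, smul_add, map_smul,
      zw, Finsupp.smul_single, smul_eq_mul, mul_one]

lemma βH_cns (k : ℕ) (X : H) :
    βH (Cns k X) = (k : ℚ) • Cns (k + 1) (σH X) + Cns k (βH X) := by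
  induction X using Finsupp.induction_linear with
  | zero => simp
  | add f g hf hg => simp only [map_add, hf, hg, smul_add]; abel
  | single a c =>
    rw [Cns_single, βH, lift_single, betw_cons, smul_add, lift_single, map_smul, σH,
      lift_single, map_smul, smul_comm]

lemma plusw_cons (k : ℕ) (U : List ℕ) :
    plusw (k :: U) = zw ((k + 1) :: U) + Cns k (plusw U) := rfl

lemma plusw_mem {a : List ℕ} (ha : ∀ k ∈ a, 2 ≤ k) : plusw a ∈ H2S := by
  induction a with
  | nil => exact Submodule.zero_mem _
  | cons k U ih =>
    rw [plusw]
    refine Submodule.add_mem _ (zw_mem ?_) (cns_mem (ha k (List.mem_cons_self))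
      (ih fun m hm => ha m (List.mem_cons_of_mem _ hm)))
    intro m hm
    rcases List.mem_cons.1 hm with rfl | hm'
    · exact le_trans (ha k (List.mem_cons_self)) (Nat.le_succ _)
    · exact ha m (List.mem_cons_of_mem _ hm')

lemma hm_zw_cons (k l : ℕ) (u v : List ℕ) :
    hm (zw (k :: u)) (zw (l :: v)) =
      Cns k (hm (zw u) (zw (l :: v))) + Cns l (hm (zw (k :: u)) (zw v)) +
        Cns (k + l) (hm (zw u) (zw v)) := by
  rw [hm_zw_zw, hmulW_cons_cons, hm_zw_zw, hm_zw_zw, hm_zw_zw]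

lemma hm_cnsL_zw (k l : ℕ) (X : H) (v : List ℕ) :
    hm (Cns k X) (zw (l :: v)) =
      Cns k (hm X (zw (l :: v))) + Cns l (hm (Cns k X) (zw v)) +
        Cns (k + l) (hm X (zw v)) := by
  rw [zw_cons l v, hm_cons, ← zw_cons]

/-- `z₁ * b = σ(b) + plus(b)`. -/
lemma L1 (b : List ℕ) : hm (zw [1]) (zw b) = sigw b + plusw b := by
  induction b with
  | nil =>
    rw [hm_zw_zw, hmulW_nil_right]
    show _ = zw [1] + 0
    rw [add_zero, zw]
  | cons l V ih =>
    rw [hm_zw_cons 1 l [] V, hm_one_left, hm_one_left, ih]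
    rw [sigw_cons, plusw_cons, zw_cons 1 (l :: V), zw_cons (l + 1) V, map_add]
    have h1l : 1 + l = l + 1 := by omega
    rw [h1l]
    abel

/-- `a * z₁ = σ(a) + plus(a)`. -/
lemma L1R (a : List ℕ) : hm (zw a) (zw [1]) = sigw a + plusw a := by
  induction a with
  | nil =>
    rw [hm_zw_zw, hmulW_nil_left]
    show _ = zw [1] + 0
    rw [add_zero, zw]
  | cons k U ih =>
    rw [hm_zw_cons k 1 U [], hm_one_right, hm_one_right, ih]
    rw [sigw_cons, plusw_cons, zw_cons 1 (k :: U), zw_cons (k + 1) U, map_add]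
    abel

/-- `σ(a*b) ≡ σ(a)*b  mod 𝔥^{≥2}`. -/
lemma M1 : ∀ (a b : List ℕ), (∀ k ∈ a, 2 ≤ k) → (∀ k ∈ b, 2 ≤ k) →
    σH (hm (zw a) (zw b)) - hm (sigw a) (zw b) ∈ H2S := by
  intro a
  induction a with
  | nil =>
    intro b _ hb
    rw [hm_one_left, σH_zw]
    have hs : sigw [] = zw [1] := rfl
    rw [hs, L1]
    have : sigw b - (sigw b + plusw b) = -plusw b := by abel
    rw [this]
    exact Submodule.neg_mem _ (plusw_mem hb)
  | cons k U ihU =>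
    intro b
    induction b with
    | nil =>
      intro _ _
      rw [hm_one_right, hm_one_right, σH_zw, sub_self]
      exact Submodule.zero_mem _
    | cons l V ihV =>
      intro ha hb
      have hk := ha k (List.mem_cons_self)
      have hl := hb l (List.mem_cons_self)
      have hU : ∀ m ∈ U, 2 ≤ m := fun m hm => ha m (List.mem_cons_of_mem _ hm)
      have hV : ∀ m ∈ V, 2 ≤ m := fun m hm => hb m (List.mem_cons_of_mem _ hm)
      have key : σH (hm (zw (k :: U)) (zw (l :: V))) - hm (sigw (k :: U)) (zw (l :: V)) =
          Cns k (σH (hm (zw U) (zw (l :: V))) - hm (sigw U) (zw (l :: V))) +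
          Cns l (σH (hm (zw (k :: U)) (zw V)) - hm (sigw (k :: U)) (zw V)) +
          Cns (k + l) (σH (hm (zw U) (zw V)) - hm (sigw U) (zw V)) -
          Cns (1 + l) (hm (zw (k :: U)) (zw V)) := by
        rw [hm_zw_cons k l U V]
        rw [map_add, map_add, σH_cns, σH_cns, σH_cns]
        rw [sigw_cons]
        simp only [map_add, LinearMap.add_apply, map_sub, hm_cnsL_zw, sigw_cons,
          hm_zw_cons 1 l (k :: U) V, hm_zw_cons k l U V]
        abel
      rw [key]
      refine Submodule.sub_mem _ (Submodule.add_mem _ (Submodule.add_mem _ ?_ ?_) ?_) ?_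
      · exact cns_mem hk (ihU _ hU hb)
      · exact cns_mem hl (ihV ha hV)
      · exact cns_mem (le_trans hk (Nat.le_add_right _ _)) (ihU _ hU hV)
      · exact cns_mem (by omega) (hm_mem (zw_mem ha) (zw_mem hV))

lemma hm_zwL_cns (k l : ℕ) (u : List ℕ) (Y : H) :
    hm (zw (k :: u)) (Cns l Y) =
      Cns k (hm (zw u) (Cns l Y)) + Cns l (hm (zw (k :: u)) Y) +
        Cns (k + l) (hm (zw u) Y) := by
  rw [zw_cons k u, hm_cons, ← zw_cons]

/-- `σ(a*b) ≡ a*σ(b)  mod 𝔥^{≥2}`. -/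
lemma M2 : ∀ (a b : List ℕ), (∀ k ∈ a, 2 ≤ k) → (∀ k ∈ b, 2 ≤ k) →
    σH (hm (zw a) (zw b)) - hm (zw a) (sigw b) ∈ H2S := by
  intro a
  induction a with
  | nil =>
    intro b _ _
    rw [hm_one_left, hm_one_left, σH_zw, sub_self]
    exact Submodule.zero_mem _
  | cons k U ihU =>
    intro b
    induction b with
    | nil =>
      intro ha _
      rw [hm_one_right, σH_zw]
      have hs : sigw [] = zw [1] := rfl
      rw [hs, L1R]
      have : sigw (k :: U) - (sigw (k :: U) + plusw (k :: U)) = -plusw (k :: U) := by abel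
      rw [this]
      exact Submodule.neg_mem _ (plusw_mem ha)
    | cons l V ihV =>
      intro ha hb
      have hk := ha k (List.mem_cons_self)
      have hl := hb l (List.mem_cons_self)
      have hU : ∀ m ∈ U, 2 ≤ m := fun m hm => ha m (List.mem_cons_of_mem _ hm)
      have hV : ∀ m ∈ V, 2 ≤ m := fun m hm => hb m (List.mem_cons_of_mem _ hm)
      have key : σH (hm (zw (k :: U)) (zw (l :: V))) - hm (zw (k :: U)) (sigw (l :: V)) =
          Cns k (σH (hm (zw U) (zw (l :: V))) - hm (zw U) (sigw (l :: V))) +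
          Cns l (σH (hm (zw (k :: U)) (zw V)) - hm (zw (k :: U)) (sigw V)) +
          Cns (k + l) (σH (hm (zw U) (zw V)) - hm (zw U) (sigw V)) -
          Cns (k + 1) (hm (zw U) (zw (l :: V))) := by
        rw [hm_zw_cons k l U V]
        rw [map_add, map_add, σH_cns, σH_cns, σH_cns]
        simp only [sigw_cons, map_add, map_sub, hm_zwL_cns, hm_zw_cons k 1 U (l :: V),
          hm_zw_cons k l U V]
        abel
      rw [key]
      refine Submodule.sub_mem _ (Submodule.add_mem _ (Submodule.add_mem _ ?_ ?_) ?_) ?_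
      · exact cns_mem hk (ihU _ hU hb)
      · exact cns_mem hl (ihV ha hV)
      · exact cns_mem (le_trans hk (Nat.le_add_right _ _)) (ihU _ hU hV)
      · exact cns_mem (by omega) (hm_mem (zw_mem hU) (zw_mem hb))

/-- The central lemma: `β` is a harmonic derivation modulo `𝔥^{≥2}`. -/
lemma Cmain : ∀ (a b : List ℕ), (∀ k ∈ a, 2 ≤ k) → (∀ k ∈ b, 2 ≤ k) →
    βH (hm (zw a) (zw b)) - hm (betw a) (zw b) - hm (zw a) (betw b) ∈ H2S := by
  intro a
  induction a with
  | nil =>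
    intro b _ _
    have h0 : betw [] = 0 := rfl
    rw [hm_one_left, hm_one_left, βH_zw, h0, map_zero, LinearMap.zero_apply, sub_zero,
      sub_self]
    exact Submodule.zero_mem _
  | cons k U ihU =>
    intro b
    induction b with
    | nil =>
      intro _ _
      have h0 : betw [] = 0 := rfl
      rw [hm_one_right, hm_one_right, βH_zw, h0, map_zero, sub_self, zero_sub]
      exact Submodule.neg_mem _ (Submodule.zero_mem _)
    | cons l V ihV =>
      intro ha hb
      have hk := ha k (List.mem_cons_self)
      have hl := hb l (List.mem_cons_self)
      have hU : ∀ m ∈ U, 2 ≤ m := fun m hm => ha m (List.mem_cons_of_mem _ hm)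
      have hV : ∀ m ∈ V, 2 ≤ m := fun m hm => hb m (List.mem_cons_of_mem _ hm)
      have e1 : k + 1 + l = k + l + 1 := by omega
      have e2 : k + (l + 1) = k + l + 1 := by omega
      have key : βH (hm (zw (k :: U)) (zw (l :: V))) - hm (betw (k :: U)) (zw (l :: V)) -
            hm (zw (k :: U)) (betw (l :: V)) =
          Cns k (βH (hm (zw U) (zw (l :: V))) - hm (betw U) (zw (l :: V)) -
            hm (zw U) (betw (l :: V))) +
          Cns l (βH (hm (zw (k :: U)) (zw V)) - hm (betw (k :: U)) (zw V) -
            hm (zw (k :: U)) (betw V)) +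
          Cns (k + l) (βH (hm (zw U) (zw V)) - hm (betw U) (zw V) - hm (zw U) (betw V)) +
          (k : ℚ) • Cns (k + 1) (σH (hm (zw U) (zw (l :: V))) - hm (sigw U) (zw (l :: V))) +
          (l : ℚ) • Cns (l + 1) (σH (hm (zw (k :: U)) (zw V)) - hm (zw (k :: U)) (sigw V)) +
          Cns (k + l + 1) ((k : ℚ) • (σH (hm (zw U) (zw V)) - hm (sigw U) (zw V)) +
            (l : ℚ) • (σH (hm (zw U) (zw V)) - hm (zw U) (sigw V))) := by
        rw [hm_zw_cons k l U V]
        rw [map_add, map_add, βH_cns, βH_cns, βH_cns]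
        simp only [betw_cons, map_add, map_sub, map_smul, LinearMap.add_apply,
          LinearMap.smul_apply, hm_cnsL_zw, hm_zwL_cns, hm_zw_cons k l U V,
          Nat.cast_add, add_smul, smul_add, smul_sub, e1, e2]
        abel
      rw [key]
      refine Submodule.add_mem _ (Submodule.add_mem _ (Submodule.add_mem _
        (Submodule.add_mem _ (Submodule.add_mem _ ?_ ?_) ?_) ?_) ?_) ?_
      · exact cns_mem hk (ihU _ hU hb)
      · exact cns_mem hl (ihV ha hV)
      · exact cns_mem (le_trans hk (Nat.le_add_right _ _)) (ihU _ hU hV)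
      · exact Submodule.smul_mem _ _ (cns_mem (by omega) (M1 U (l :: V) hU hb))
      · exact Submodule.smul_mem _ _ (cns_mem (by omega) (M2 (k :: U) V ha hV))
      · refine cns_mem (by omega) (Submodule.add_mem _
          (Submodule.smul_mem _ _ (M1 U V hU hV)) (Submodule.smul_mem _ _ (M2 U V hU hV)))

/-! ### The shuffle side -/

/-- Increment the head of a list (identity on `[]`). -/
def incH : List ℕ → List ℕ
  | [] => []
  | a :: t => (a + 1) :: t

lemma fromXYAux_succ : ∀ (l : List Bool) (c : ℕ), fromXYAux l (c + 1) = incH (fromXYAux l c)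
  | [], _ => rfl
  | false :: t, c => by rw [fromXYAux, fromXYAux, fromXYAux_succ t (c + 1)]
  | true :: t, c => by rw [fromXYAux, fromXYAux]; rfl

lemma fromXY_true (l : List Bool) : fromXY (true :: l) = 1 :: fromXY l := rfl

lemma fromXY_false (l : List Bool) : fromXY (false :: l) = incH (fromXY l) :=
  fromXYAux_succ l 0

lemma fromXYAux_replicate (m : ℕ) (l : List Bool) (c : ℕ) :
    fromXYAux (List.replicate m false ++ l) c = fromXYAux l (c + m) := by
  induction m generalizing c with
  | zero => rfl
  | succ n ih =>
    rw [List.replicate_succ, List.cons_append, fromXYAux, ih]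
    congr 1
    omega

lemma toXY_cons (k : ℕ) (U : List ℕ) :
    toXY (k :: U) = List.replicate (k - 1) false ++ true :: toXY U := by
  simp [toXY]

lemma fromXY_toXY : ∀ (U : List ℕ), (∀ x ∈ U, 1 ≤ x) → fromXY (toXY U) = U := by
  intro U
  induction U with
  | nil => intro _; rfl
  | cons k T ih =>
    intro h
    rw [toXY_cons, fromXY, fromXYAux_replicate, fromXYAux]
    have h2 : fromXYAux (toXY T) 0 = T := ih fun x hx => h x (List.mem_cons_of_mem _ hx)
    have h3 : 0 + (k - 1) + 1 = k := by
      have := h k (List.mem_cons_self); omega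
    rw [h2, h3]

lemma toXY_one_cons (U : List ℕ) : toXY (1 :: U) = true :: toXY U := by
  rw [toXY_cons]; rfl

lemma toXY_succ_cons (k : ℕ) (U : List ℕ) :
    toXY ((k + 2) :: U) = false :: toXY ((k + 1) :: U) := by
  rw [toXY_cons, toXY_cons]
  have h1 : k + 2 - 1 = (k + 1 - 1) + 1 := by omega
  rw [h1, List.replicate_succ, List.cons_append]

/-- shW equations -/
lemma shW_nil_left (v : List Bool) : shW [] v = Finsupp.single v 1 := by
  cases v <;> rw [shW]

lemma shW_cons_nil (a : Bool) (u : List Bool) : shW (a :: u) [] = Finsupp.single (a :: u) 1 := by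
  rw [shW]

lemma shW_cons_cons (a b : Bool) (u v : List Bool) :
    shW (a :: u) (b :: v) =
      Finsupp.mapDomain (a :: ·) (shW u (b :: v)) + Finsupp.mapDomain (b :: ·) (shW (a :: u) v) := by
  rw [shW]

/-- Linear map versions of mapDomain. -/
def FXY : Bw →ₗ[ℚ] H := Finsupp.lmapDomain ℚ ℚ fromXY
def BC (b : Bool) : Bw →ₗ[ℚ] Bw := Finsupp.lmapDomain ℚ ℚ (b :: ·)
def IncL : H →ₗ[ℚ] H := Finsupp.lmapDomain ℚ ℚ incH

lemma FXY_apply (μ : Bw) : FXY μ = Finsupp.mapDomain fromXY μ := rfl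
lemma BC_apply (b : Bool) (μ : Bw) : BC b μ = Finsupp.mapDomain (b :: ·) μ := rfl
lemma IncL_apply (X : H) : IncL X = Finsupp.mapDomain incH X := rfl

lemma FXY_true (μ : Bw) : FXY (BC true μ) = Cns 1 (FXY μ) := by
  rw [FXY_apply, BC_apply, ← Finsupp.mapDomain_comp, FXY_apply, Cns_apply,
    ← Finsupp.mapDomain_comp]
  congr 1

lemma FXY_false (μ : Bw) : FXY (BC false μ) = IncL (FXY μ) := by
  rw [FXY_apply, BC_apply, ← Finsupp.mapDomain_comp, FXY_apply, IncL_apply,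
    ← Finsupp.mapDomain_comp]
  congr 1
  funext l
  exact fromXY_false l

lemma IncL_Cns (m : ℕ) (X : H) : IncL (Cns m X) = Cns (m + 1) X := by
  rw [IncL_apply, Cns_apply, ← Finsupp.mapDomain_comp, Cns_apply]
  congr 1

lemma IncL_zw (m : ℕ) (U : List ℕ) : IncL (zw (m :: U)) = zw ((m + 1) :: U) := by
  rw [IncL_apply, zw, Finsupp.mapDomain_single]
  rfl

/-- `Q(a) = a ⧢ z₁` and `P(a) = a ⧢ z₂` on words. -/
def Qz (a : List ℕ) : H := FXY (shW (toXY a) [true])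
def Pz (a : List ℕ) : H := FXY (shW (toXY a) [false, true])

lemma shmulW_one (a : List ℕ) : shmulW a [1] = Qz a := by
  rw [shmulW, Qz, FXY_apply]
  congr 1

lemma shmulW_two (a : List ℕ) : shmulW a [2] = Pz a := by
  rw [shmulW, Pz, FXY_apply]
  congr 1

lemma FXY_single (l : List Bool) (c : ℚ) :
    FXY (Finsupp.single l c) = Finsupp.single (fromXY l) c := by
  rw [FXY_apply, Finsupp.mapDomain_single]

lemma BC_single (b : Bool) (l : List Bool) (c : ℚ) :
    BC b (Finsupp.single l c) = Finsupp.single (b :: l) c := by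
  rw [BC_apply, Finsupp.mapDomain_single]

lemma sum1split (n : ℕ) (U : List ℕ) :
    ∑ j ∈ Finset.range (n + 2), zw ((1 + j) :: (n + 2 - j) :: U) =
      (∑ j ∈ Finset.range (n + 1), zw ((1 + j + 1) :: (n + 1 - j) :: U)) +
        zw (1 :: (n + 2) :: U) := by
  rw [Finset.sum_range_succ' (fun j => zw ((1 + j) :: (n + 2 - j) :: U)) (n + 1)]
  congr 1
  refine Finset.sum_congr rfl fun j hj => ?_
  rw [show 1 + (j + 1) = 1 + j + 1 by omega, show n + 2 - (j + 1) = n + 1 - j by omega]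

/-- `S1`: the recursion for `w ⧢ z₁` at the level of `z`-words. -/
lemma S1 : ∀ (k : ℕ) (U : List ℕ), (∀ x ∈ U, 1 ≤ x) →
    Qz ((k + 1) :: U) = Cns (k + 1) (Qz U) +
      ∑ j ∈ Finset.range (k + 1), zw ((1 + j) :: (k + 1 - j) :: U) := by
  intro k
  induction k with
  | zero =>
    intro U hU
    rw [Finset.sum_range_one]
    rw [Qz, toXY_one_cons, shW_cons_cons, shW_cons_nil, ← BC_apply, ← BC_apply, BC_single,
      map_add, FXY_true, FXY_single, fromXY_true, fromXY_true, fromXY_toXY U hU]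
    norm_num
    rfl
  | succ n ih =>
    intro U hU
    have hU1 : ∀ x ∈ (n + 1) :: U, 1 ≤ x := by
      intro x hx
      rcases List.mem_cons.1 hx with rfl | hx'
      · omega
      · exact hU x hx'
    rw [Qz, toXY_succ_cons, shW_cons_cons, shW_cons_nil, ← BC_apply, ← BC_apply, BC_single,
      map_add, FXY_false, FXY_single, fromXY_true, fromXY_false, fromXY_toXY _ hU1]
    have hq : FXY (shW (toXY ((n + 1) :: U)) [true]) = Qz ((n + 1) :: U) := rfl
    rw [hq, ih U hU, map_add, IncL_Cns, map_sum]
    have hs : ∀ j ∈ Finset.range (n + 1),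
        IncL (zw ((1 + j) :: (n + 1 - j) :: U)) = zw ((1 + j + 1) :: (n + 1 - j) :: U) :=
      fun j _ => IncL_zw _ _
    rw [Finset.sum_congr rfl hs, sum1split]
    have hinc : incH ((n + 1) :: U) = (n + 2) :: U := rfl
    rw [hinc]
    have hz : Finsupp.single (1 :: (n + 2) :: U) (1 : ℚ) = zw (1 :: (n + 2) :: U) := rfl
    rw [hz]
    abel

lemma sum2split (n : ℕ) (U : List ℕ) :
    ∑ j ∈ Finset.range (n + 2), ((j : ℚ) + 1) • zw ((j + 2) :: (n + 2 - j) :: U) =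
      (∑ j ∈ Finset.range (n + 1), ((j : ℚ) + 1) • zw ((j + 2 + 1) :: (n + 1 - j) :: U)) +
        (∑ j ∈ Finset.range (n + 1), zw ((j + 2 + 1) :: (n + 1 - j) :: U)) +
        zw (2 :: (n + 2) :: U) := by
  rw [Finset.sum_range_succ' (fun j => ((j : ℚ) + 1) • zw ((j + 2) :: (n + 2 - j) :: U)) (n + 1),
    ← Finset.sum_add_distrib]
  congr 1
  · refine Finset.sum_congr rfl fun j hj => ?_
    rw [show j + 1 + 2 = j + 2 + 1 by omega, show n + 2 - (j + 1) = n + 1 - j by omega]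
    have hc : (((j + 1 : ℕ) : ℚ) + 1) = ((j : ℚ) + 1) + 1 := by push_cast; ring
    rw [hc, add_smul, one_smul]
  · norm_num

/-- `S2`: the recursion for `w ⧢ z₂` at the level of `z`-words. -/
lemma S2 : ∀ (k : ℕ) (U : List ℕ), (∀ x ∈ U, 1 ≤ x) →
    Pz ((k + 1) :: U) = Cns (k + 1) (Pz U) + ((k + 1 : ℕ) : ℚ) • Cns (k + 2) (Qz U) +
      ∑ j ∈ Finset.range (k + 1), ((j : ℚ) + 1) • zw ((j + 2) :: (k + 1 - j) :: U) := by
  intro k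
  induction k with
  | zero =>
    intro U hU
    rw [Finset.sum_range_one]
    rw [Pz, toXY_one_cons, shW_cons_cons, ← BC_apply, ← BC_apply, map_add, FXY_true, FXY_false]
    have hq : FXY (shW (true :: toXY U) [true]) = Qz (1 :: U) := by
      rw [Qz, toXY_one_cons]
    rw [hq, S1 0 U hU, Finset.sum_range_one, map_add, IncL_Cns, IncL_zw]
    have hp : FXY (shW (toXY U) [false, true]) = Pz U := rfl
    rw [hp]
    norm_num
    abel
  | succ n ih =>
    intro U hU
    rw [Pz, toXY_succ_cons, shW_cons_cons, ← BC_apply, ← BC_apply, map_add, FXY_false,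
      FXY_false]
    have hp : FXY (shW (toXY ((n + 1) :: U)) [false, true]) = Pz ((n + 1) :: U) := rfl
    have hq : FXY (shW (false :: toXY ((n + 1) :: U)) [true]) = Qz ((n + 2) :: U) := by
      rw [Qz, toXY_succ_cons]
    rw [hp, hq, ih U hU, S1 (n + 1) U hU]
    rw [map_add, map_add, map_add, IncL_Cns, IncL_Cns, map_smul, IncL_Cns, map_sum, map_sum]
    have hs1 : ∀ j ∈ Finset.range (n + 1),
        IncL (((j : ℚ) + 1) • zw ((j + 2) :: (n + 1 - j) :: U)) =
          ((j : ℚ) + 1) • zw ((j + 2 + 1) :: (n + 1 - j) :: U) := by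
      intro j _
      rw [map_smul, IncL_zw]
    have hs2 : ∑ j ∈ Finset.range (n + 2), IncL (zw ((1 + j) :: (n + 2 - j) :: U)) =
        (∑ j ∈ Finset.range (n + 1), zw ((j + 2 + 1) :: (n + 1 - j) :: U)) +
          zw (2 :: (n + 2) :: U) := by
      have : ∀ j ∈ Finset.range (n + 2),
          IncL (zw ((1 + j) :: (n + 2 - j) :: U)) = zw ((1 + j + 1) :: (n + 2 - j) :: U) :=
        fun j _ => IncL_zw _ _
      rw [Finset.sum_congr rfl this,
        Finset.sum_range_succ' (fun j => zw ((1 + j + 1) :: (n + 2 - j) :: U)) (n + 1)]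
      congr 1
      refine Finset.sum_congr rfl fun j hj => ?_
      rw [show 1 + (j + 1) + 1 = j + 2 + 1 by omega, show n + 2 - (j + 1) = n + 1 - j by omega]
    rw [Finset.sum_congr rfl hs1, hs2, sum2split]
    have hc : ((n + 1 + 1 : ℕ) : ℚ) = ((n + 1 : ℕ) : ℚ) + 1 := by push_cast; ring
    rw [hc, add_smul, one_smul]
    abel

lemma sumBsplit (m : ℕ) (U : List ℕ) :
    ∑ j ∈ Finset.range (m + 2), zw ((1 + j) :: (m + 2 - j) :: U) =
      zw (1 :: (m + 2) :: U) + (∑ j ∈ Finset.range m, zw ((2 + j) :: (m + 1 - j) :: U)) +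
        zw ((m + 2) :: 1 :: U) := by
  rw [Finset.sum_range_succ (fun j => zw ((1 + j) :: (m + 2 - j) :: U)) (m + 1),
    Finset.sum_range_succ' (fun j => zw ((1 + j) :: (m + 2 - j) :: U)) m]
  have h1 : ∀ j ∈ Finset.range m, zw ((1 + (j + 1)) :: (m + 2 - (j + 1)) :: U) =
      zw ((2 + j) :: (m + 1 - j) :: U) := fun j _ => by
    rw [show 1 + (j + 1) = 2 + j by omega, show m + 2 - (j + 1) = m + 1 - j by omega]
  rw [Finset.sum_congr rfl h1, show 1 + (m + 1) = m + 2 by omega,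
    show m + 2 - (m + 1) = 1 by omega, show 1 + 0 = 1 by omega, show m + 2 - 0 = m + 2 by omega]
  abel

/-- Claim B: `w ⧢ z₁ ≡ 2σ(w) − z₁w  mod 𝔥^{≥2}` for `w ∈ 𝔥^{≥2}`. -/
lemma ClaimB : ∀ (b : List ℕ), (∀ k ∈ b, 2 ≤ k) →
    Qz b - (2 : ℚ) • sigw b + zw (1 :: b) ∈ H2S := by
  intro b hb
  induction b with
  | nil =>
    have h1 : Qz [] = zw [1] := by
      rw [Qz, show toXY [] = [] from rfl, shW_nil_left, FXY_single]
      rfl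
    have h2 : sigw [] = zw [1] := rfl
    have h3 : zw [1] - (2 : ℚ) • zw [1] + zw (1 :: ([] : List ℕ)) = 0 := by
      have : zw (1 :: ([] : List ℕ)) = zw [1] := rfl
      rw [this]; module
    rw [h1, h2, h3]
    exact Submodule.zero_mem _
  | cons k U ih =>
    have hk2 : 2 ≤ k := hb k (List.mem_cons_self)
    obtain ⟨m, rfl⟩ : ∃ m, k = m + 2 := ⟨k - 2, by omega⟩
    have hU : ∀ x ∈ U, 2 ≤ x := fun x hx => hb x (List.mem_cons_of_mem _ hx)
    have hU1 : ∀ x ∈ U, 1 ≤ x := fun x hx => le_trans (by omega) (hU x hx)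
    have hS := S1 (m + 1) U hU1
    rw [show m + 1 + 1 = m + 2 from rfl] at hS
    have key : Qz ((m + 2) :: U) - (2 : ℚ) • sigw ((m + 2) :: U) + zw (1 :: (m + 2) :: U) =
        Cns (m + 2) (Qz U - (2 : ℚ) • sigw U + zw (1 :: U)) +
          ∑ j ∈ Finset.range m, zw ((2 + j) :: (m + 1 - j) :: U) := by
      rw [hS, sumBsplit, sigw_cons]
      simp only [map_add, map_sub, map_smul]
      rw [← zw_cons]
      module
    rw [key]
    refine Submodule.add_mem _ (cns_mem (by omega) (ih hU)) ?_
    refine Submodule.sum_mem _ fun j hj => ?_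
    have hjm : j < m := Finset.mem_range.1 hj
    refine zw_mem ?_
    intro x hx
    rcases List.mem_cons.1 hx with rfl | hx'
    · omega
    rcases List.mem_cons.1 hx' with rfl | hx''
    · omega
    · exact hU x hx''

/-- Claim A: `w ⧢ z₂ ≡ 2β(w)  mod 𝔥^{≥2}` for `w ∈ 𝔥^{≥2}`. -/
lemma ClaimA : ∀ (a : List ℕ), (∀ k ∈ a, 2 ≤ k) →
    Pz a - (2 : ℚ) • betw a ∈ H2S := by
  intro a ha
  induction a with
  | nil =>
    have h1 : Pz [] = zw [2] := by
      rw [Pz, show toXY [] = [] from rfl, shW_nil_left, FXY_single]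
      rfl
    have h2 : betw [] = 0 := rfl
    rw [h1, h2, smul_zero, sub_zero]
    exact zw_mem (by intro k hk; rcases List.mem_cons.1 hk with rfl | h; omega; simp at h)
  | cons k U ih =>
    have hk2 : 2 ≤ k := ha k (List.mem_cons_self)
    obtain ⟨m, rfl⟩ : ∃ m, k = m + 2 := ⟨k - 2, by omega⟩
    have hU : ∀ x ∈ U, 2 ≤ x := fun x hx => ha x (List.mem_cons_of_mem _ hx)
    have hU1 : ∀ x ∈ U, 1 ≤ x := fun x hx => le_trans (by omega) (hU x hx)
    have hS := S2 (m + 1) U hU1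
    rw [show m + 1 + 1 = m + 2 from rfl, show m + 1 + 2 = m + 3 from rfl] at hS
    have hsplit : ∑ j ∈ Finset.range (m + 2), ((j : ℚ) + 1) • zw ((j + 2) :: (m + 2 - j) :: U) =
        (∑ j ∈ Finset.range (m + 1), ((j : ℚ) + 1) • zw ((j + 2) :: (m + 2 - j) :: U)) +
          ((m + 2 : ℕ) : ℚ) • zw ((m + 3) :: 1 :: U) := by
      rw [Finset.sum_range_succ (fun j => ((j : ℚ) + 1) • zw ((j + 2) :: (m + 2 - j) :: U))
        (m + 1)]
      congr 1
      rw [show m + 1 + 2 = m + 3 by omega, show m + 2 - (m + 1) = 1 by omega]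
      congr 1
      push_cast; ring
    have key : Pz ((m + 2) :: U) - (2 : ℚ) • betw ((m + 2) :: U) =
        Cns (m + 2) (Pz U - (2 : ℚ) • betw U) +
          ((m + 2 : ℕ) : ℚ) • Cns (m + 3) (Qz U - (2 : ℚ) • sigw U + zw (1 :: U)) +
          ∑ j ∈ Finset.range (m + 1), ((j : ℚ) + 1) • zw ((j + 2) :: (m + 2 - j) :: U) := by
      rw [hS, hsplit, betw_cons, show m + 2 + 1 = m + 3 from rfl]
      simp only [map_add, map_sub, map_smul]
      rw [← zw_cons]
      module
    rw [key]
    refine Submodule.add_mem _ (Submodule.add_mem _ (cns_mem (by omega) (ih hU)) ?_) ?_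
    · exact Submodule.smul_mem _ _ (cns_mem (by omega) (ClaimB U hU))
    · refine Submodule.sum_mem _ fun j hj => ?_
      have hjm : j < m + 1 := Finset.mem_range.1 hj
      refine Submodule.smul_mem _ _ (zw_mem ?_)
      intro x hx
      rcases List.mem_cons.1 hx with rfl | hx'
      · omega
      rcases List.mem_cons.1 hx' with rfl | hx''
      · omega
      · exact hU x hx''

/-! ### Assembly -/

/-- The linear map `w ↦ w ⧢ z₂`. -/
def PH : H →ₗ[ℚ] H := lift (fun a => shmulW a [2])

lemma PH_zw (a : List ℕ) : PH (zw a) = Pz a := by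
  rw [PH, lift_zw, shmulW_two]

lemma shmul_z2 (w : H) : shmul w (zw [2]) = PH w := by
  rw [shmul, PH, lift, Finsupp.lsum_apply]
  refine Finsupp.sum_congr fun a _ => ?_
  rw [zw, Finsupp.sum_single_index (by simp), LinearMap.toSpanSingleton_apply, mul_one]

lemma ClaimA_gen {X : H} (hX : X ∈ H2S) : PH X - (2 : ℚ) • βH X ∈ H2S := by
  refine mem_of_forall_single (PH - (2 : ℚ) • βH) ?_ hX
  intro a ha
  simp only [LinearMap.sub_apply, LinearMap.smul_apply]
  rw [PH_zw, βH_zw]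
  exact ClaimA a ha

lemma Cgen {X Y : H} (hX : X ∈ H2S) (hY : Y ∈ H2S) :
    βH (hm X Y) - hm (βH X) Y - hm X (βH Y) ∈ H2S := by
  refine mem_of_forall_single
    (βH ∘ₗ hm.flip Y - (hm.flip Y) ∘ₗ βH - hm.flip (βH Y)) ?_ hX
  intro a ha
  simp only [LinearMap.sub_apply, LinearMap.comp_apply, LinearMap.flip_apply, βH_zw]
  refine mem_of_forall_single (βH ∘ₗ hm (zw a) - hm (betw a) - (hm (zw a)) ∘ₗ βH) ?_ hY
  intro b hb
  simp only [LinearMap.sub_apply, LinearMap.comp_apply, βH_zw]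
  exact Cmain a b ha hb

lemma z2_mem : zw [2] ∈ H2S := by
  refine zw_mem ?_
  intro k hk
  rcases List.mem_cons.1 hk with rfl | h
  · omega
  · simp at h

theorem main_result (u v : H) (hu : isH2 u) (hv : isH2 v) : isH2 (Rop u v) := by
  rw [isH2_iff] at hu hv ⊢
  rw [Rop, phi, phi, phi]
  simp only [hmul_eq_hm, shmul_z2]
  set z2 : H := zw [2] with hz2def
  have key : hm (hm u v) z2 - PH (hm u v) - hm (hm u z2 - PH u) v - hm u (hm v z2 - PH v) =
      (hm (hm u v) z2 - hm (hm u z2) v - hm u (hm v z2))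
      - (PH (hm u v) - (2 : ℚ) • βH (hm u v))
      + hm (PH u - (2 : ℚ) • βH u) v
      + hm u (PH v - (2 : ℚ) • βH v)
      - (2 : ℚ) • (βH (hm u v) - hm (βH u) v - hm u (βH v)) := by
    simp only [map_sub, map_smul, LinearMap.sub_apply, LinearMap.smul_apply]
    module
  rw [key]
  have hz2 : z2 ∈ H2S := z2_mem
  refine Submodule.sub_mem _ (Submodule.add_mem _ (Submodule.add_mem _ (Submodule.sub_mem _
    ?_ ?_) ?_) ?_) ?_
  · exact Submodule.sub_mem _ (Submodule.sub_mem _ (hm_mem (hm_mem hu hv) hz2)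
      (hm_mem (hm_mem hu hz2) hv)) (hm_mem hu (hm_mem hv hz2))
  · exact ClaimA_gen (hm_mem hu hv)
  · exact hm_mem (ClaimA_gen hu) hv
  · exact hm_mem hu (ClaimA_gen hv)
  · exact Submodule.smul_mem _ _ (Cgen hu hv)

end Stmt0Aux


/-- For all `u, v ∈ 𝔥^{≥2}`, `R(u,v) = φ(u*v) − φ(u)*v − u*φ(v)` lies in `𝔥^{≥2}`. -/
theorem stmt0 (u v : H) (hu : isH2 u) (hv : isH2 v) : isH2 (Rop u v) :=
  Stmt0Aux.main_result u v hu hv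
end
end

section
/- For every r ≥ 1 and integers k₁, …, k_r ≥ 2, the element z_{k₁}⋯z_{k_r} ⧢ z₂ − Σ_{1 ≤ i ≤ j ≤ r} 2k_i · z_{k₁}⋯z_{k_{i−1}} z_{k_i+1} z_{k_{i+1}}⋯z_{k_j} z₁ z_{k_{j+1}}⋯z_{k_r} lies in 𝔥^{≥2}; that is, modulo the span of words all of whose indices are ≥ 2, the shuffle product z_{k₁}⋯z_{k_r} ⧢ z₂ is congruent to Σ_{1 ≤ i ≤ j ≤ r} 2k_i · z_{k₁}⋯z_{k_i+1}⋯z_{k_j} z₁ z_{k_{j+1}}⋯z_{k_r}. -/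
open scoped Classical BigOperators

noncomputable section

-- === auxiliary ===
def M2 : Submodule ℚ H where
  carrier := {w | isH2 w}
  zero_mem' := by intro l hl k hk; simp at hl
  add_mem' := by
    intro a b ha hb l hl k hk
    rcases Finset.mem_union.1 (Finsupp.support_add hl) with h | h
    · exact ha l h k hk
    · exact hb l h k hk
  smul_mem' := by
    intro c w hw l hl k hk
    exact hw l (Finsupp.support_smul hl) k hk

lemma single_mem_M2 {l : List ℕ} (h : ∀ k ∈ l, 2 ≤ k) (c : ℚ) : Finsupp.single l c ∈ M2 := by
  intro a ha k hk
  have := Finsupp.support_single_subset ha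
  simp only [Finset.mem_singleton] at this
  subst this; exact h k hk

lemma mapDomain_cons_mem_M2 {k : ℕ} (hk : 2 ≤ k) {w : H} (hw : w ∈ M2) :
    Finsupp.mapDomain (k :: ·) w ∈ M2 := by
  intro a ha m hm
  have := Finsupp.mapDomain_support ha
  simp only [Finset.mem_image] at this
  obtain ⟨b, hb, rfl⟩ := this
  rcases List.mem_cons.1 hm with rfl | hm'
  · exact hk
  · exact hw b hb m hm'

lemma fromXYAux_block (a : ℕ) : ∀ (c : ℕ) (w : List Bool),
    fromXYAux (List.replicate a false ++ true :: w) c = (c + a + 1) :: fromXYAux w 0 := by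
  induction a with
  | zero => intro c w; simp [fromXYAux]
  | succ n ih =>
    intro c w
    rw [List.replicate_succ, List.cons_append]
    show fromXYAux _ (c+1) = _
    rw [ih]; congr 1; omega

lemma fromXY_block (a : ℕ) (w : List Bool) :
    fromXY (List.replicate a false ++ true :: w) = (a+1) :: fromXY w := by
  unfold fromXY; rw [fromXYAux_block]; norm_num

lemma toXY_cons (k : ℕ) (t : List ℕ) :
    toXY (k :: t) = List.replicate (k-1) false ++ true :: toXY t := by
  simp [toXY]

lemma fromXY_toXY : ∀ {t : List ℕ}, (∀ k ∈ t, 1 ≤ k) → fromXY (toXY t) = t := by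
  intro t
  induction t with
  | nil => intro _; rfl
  | cons k t ih =>
    intro ht
    rw [toXY_cons, fromXY_block, ih (fun m hm => ht m (List.mem_cons_of_mem _ hm))]
    have := ht k (List.mem_cons_self)
    congr 1; omega

def FXY : Bw →ₗ[ℚ] H := Finsupp.lmapDomain ℚ ℚ fromXY
def prep (k : ℕ) : H →ₗ[ℚ] H := Finsupp.lmapDomain ℚ ℚ (k :: ·)

lemma FXY_single (w : List Bool) (c : ℚ) : FXY (Finsupp.single w c) = Finsupp.single (fromXY w) c := by
  simp [FXY, Finsupp.lmapDomain_apply, Finsupp.mapDomain_single]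

lemma prep_single (k : ℕ) (l : List ℕ) (c : ℚ) : prep k (Finsupp.single l c) = Finsupp.single (k :: l) c := by
  simp [prep, Finsupp.lmapDomain_apply, Finsupp.mapDomain_single]

lemma FXY_mapDomain {g : List Bool → List Bool} {g' : List ℕ → List ℕ}
    (h : ∀ v, fromXY (g v) = g' (fromXY v)) (X : Bw) :
    FXY (Finsupp.mapDomain g X) = Finsupp.mapDomain g' (FXY X) := by
  simp only [FXY, Finsupp.lmapDomain_apply]
  rw [← Finsupp.mapDomain_comp, ← Finsupp.mapDomain_comp]
  rw [show fromXY ∘ g = g' ∘ fromXY from funext h]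

lemma prep_mem_M2 {k : ℕ} (hk : 2 ≤ k) {w : H} (hw : w ∈ M2) : prep k w ∈ M2 := by
  simpa [prep, Finsupp.lmapDomain_apply] using mapDomain_cons_mem_M2 hk hw

lemma B1 (a : ℕ) (w : List Bool) :
    shW (List.replicate a false ++ true :: w) [true] =
      (∑ j ∈ Finset.range (a+1),
        Finsupp.single (List.replicate j false ++ true ::
          (List.replicate (a-j) false ++ true :: w)) (1:ℚ)) +
      Finsupp.mapDomain (fun v => List.replicate a false ++ true :: v) (shW w [true]) := by
  induction a with
  | zero =>
    simp only [zero_add, List.replicate, List.nil_append, Finset.range_one, Finset.sum_singleton,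
      Nat.zero_sub]
    rw [shW, shW, Finsupp.mapDomain_single]
    abel
  | succ n ih =>
    rw [List.replicate_succ, List.cons_append, shW, shW, ih]
    rw [Finsupp.mapDomain_add, Finsupp.mapDomain_single, Finsupp.mapDomain_finset_sum,
      ← Finsupp.mapDomain_comp]
    rw [Finset.sum_range_succ' (n := n + 1)]
    simp only [Finsupp.mapDomain_single, Function.comp]
    rw [show (∑ i ∈ Finset.range (n + 1),
        (Finsupp.single (List.replicate (i+1) false ++ true ::
          (List.replicate (n+1-(i+1)) false ++ true :: w)) (1:ℚ))) =
      ∑ j ∈ Finset.range (n + 1),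
        (Finsupp.single (false :: (List.replicate j false ++ true ::
          (List.replicate (n-j) false ++ true :: w))) (1:ℚ)) from
      Finset.sum_congr rfl (fun i hi => by
        rw [List.replicate_succ, List.cons_append, Nat.succ_sub_succ])]
    simp only [List.replicate, List.nil_append, Nat.sub_zero, Function.comp_def,
      List.cons_append]
    abel

lemma B2 (a : ℕ) (w : List Bool) :
    shW (List.replicate a false ++ true :: w) [false, true] =
      (∑ i ∈ Finset.range (a+1),
        Finsupp.mapDomain (fun v => List.replicate (a-i+1) false ++ v)
          (shW (List.replicate i false ++ true :: w) [true]))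
      + Finsupp.mapDomain (fun v => List.replicate a false ++ true :: v)
          (shW w [false, true]) := by
  induction a with
  | zero =>
    simp only [zero_add, List.replicate, List.nil_append, Finset.range_one,
      Finset.sum_singleton, Nat.zero_sub, List.singleton_append]
    rw [shW]
    abel
  | succ n ih =>
    rw [List.replicate_succ, List.cons_append, shW, ih]
    rw [Finsupp.mapDomain_add, Finsupp.mapDomain_finset_sum]
    rw [Finset.sum_range_succ (n := n + 1)]
    rw [show (∑ i ∈ Finset.range (n + 1),
        Finsupp.mapDomain (fun x => false :: x)
          (Finsupp.mapDomain (fun v => List.replicate (n-i+1) false ++ v)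
            (shW (List.replicate i false ++ true :: w) [true]))) =
      ∑ i ∈ Finset.range (n + 1),
        Finsupp.mapDomain (fun v => List.replicate (n+1-i+1) false ++ v)
          (shW (List.replicate i false ++ true :: w) [true]) from
      Finset.sum_congr rfl (fun i hi => by
        rw [← Finsupp.mapDomain_comp]
        congr 1
        funext v
        simp only [Function.comp_apply, ← List.cons_append, ← List.replicate_succ]
        congr 2
        have := Finset.mem_range.1 hi
        omega)]
    rw [← Finsupp.mapDomain_comp]
    have h1 : ((fun x => false :: x) ∘ fun v => List.replicate n false ++ true :: v)
        = fun v => false :: List.replicate n false ++ true :: v := by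
      funext v; simp
    have e1 : (fun v : List Bool => List.replicate (n+1-(n+1)+1) false ++ v)
        = fun x => false :: x := by
      funext v; simp [Nat.sub_self, List.replicate]
    have e2 : List.replicate (n+1) false ++ true :: w
        = false :: (List.replicate n false ++ true :: w) := by
      rw [List.replicate_succ, List.cons_append]
    rw [h1, e1, e2]
    abel

lemma B3 (a : ℕ) (w : List Bool) :
    shW (List.replicate a false ++ true :: w) [false, true] =
      (∑ i ∈ Finset.range (a+1), ∑ j ∈ Finset.range (i+1),
        Finsupp.single (List.replicate (a-i+1+j) false ++ true ::
          (List.replicate (i-j) false ++ true :: w)) (1:ℚ))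
      + (∑ _i ∈ Finset.range (a+1),
          Finsupp.mapDomain (fun v => List.replicate (a+1) false ++ true :: v) (shW w [true]))
      + Finsupp.mapDomain (fun v => List.replicate a false ++ true :: v)
          (shW w [false, true]) := by
  rw [B2]
  rw [show (∑ i ∈ Finset.range (a+1),
      Finsupp.mapDomain (fun v => List.replicate (a-i+1) false ++ v)
        (shW (List.replicate i false ++ true :: w) [true])) =
    ∑ i ∈ Finset.range (a+1),
      ((∑ j ∈ Finset.range (i+1),
        Finsupp.single (List.replicate (a-i+1+j) false ++ true ::
          (List.replicate (i-j) false ++ true :: w)) (1:ℚ))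
      + Finsupp.mapDomain (fun v => List.replicate (a+1) false ++ true :: v) (shW w [true])) from
    Finset.sum_congr rfl (fun i hi => by
      rw [B1 i w, Finsupp.mapDomain_add, Finsupp.mapDomain_finset_sum, ← Finsupp.mapDomain_comp]
      congr 1
      · refine Finset.sum_congr rfl (fun j hj => ?_)
        rw [Finsupp.mapDomain_single]
        congr 1
        rw [← List.append_assoc, ← List.replicate_add]
      · congr 1
        funext v
        simp only [Function.comp_apply, ← List.append_assoc, ← List.replicate_add]
        congr 2
        have := Finset.mem_range.1 hi
        omega)]
  rw [Finset.sum_add_distrib]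

lemma FXY_def (X : Bw) : Finsupp.mapDomain fromXY X = FXY X := by
  simp [FXY]

lemma toXY_one : toXY [1] = [true] := by simp [toXY]
lemma toXY_two : toXY [2] = [false, true] := by simp [toXY]

lemma Zlem1 (k : ℕ) (hk : 1 ≤ k) (t : List ℕ) (ht : ∀ m ∈ t, 1 ≤ m) :
    shmulW (k::t) [1] =
      (∑ j ∈ Finset.range k, Finsupp.single ((j+1) :: (k-j) :: t) (1:ℚ))
      + Finsupp.mapDomain (k :: ·) (shmulW t [1]) := by
  unfold shmulW
  rw [toXY_one, toXY_cons, B1 (k-1) (toXY t), FXY_def, map_add, map_sum,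
    FXY_mapDomain (g' := (k :: ·))
      (fun v => by rw [fromXY_block, Nat.sub_add_cancel hk]),
    Nat.sub_add_cancel hk, FXY_def]
  congr 1
  refine Finset.sum_congr rfl (fun j hj => ?_)
  rw [FXY_single, fromXY_block, fromXY_block, fromXY_toXY ht]
  have hj' := Finset.mem_range.1 hj
  have : k - 1 - j + 1 = k - j := by omega
  rw [this]

lemma Zlem2 (k : ℕ) (hk : 1 ≤ k) (t : List ℕ) (ht : ∀ m ∈ t, 1 ≤ m) :
    shmulW (k::t) [2] =
      (∑ i ∈ Finset.range k, ∑ j ∈ Finset.range (i+1),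
        Finsupp.single ((k+1-(i-j)) :: (i-j+1) :: t) (1:ℚ))
      + (∑ _i ∈ Finset.range k, Finsupp.mapDomain ((k+1) :: ·) (shmulW t [1]))
      + Finsupp.mapDomain (k :: ·) (shmulW t [2]) := by
  unfold shmulW
  rw [toXY_one, toXY_two, toXY_cons, B3 (k-1) (toXY t), FXY_def, map_add, map_add,
    map_sum, map_sum, Nat.sub_add_cancel hk, FXY_def, FXY_def]
  congr 1
  · congr 1
    · refine Finset.sum_congr rfl (fun i hi => ?_)
      rw [map_sum]
      refine Finset.sum_congr rfl (fun j hj => ?_)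
      rw [FXY_single, fromXY_block, fromXY_block, fromXY_toXY ht]
      have h1 := Finset.mem_range.1 hi
      have h2 := Finset.mem_range.1 hj
      have e1 : k - 1 - i + 1 + j + 1 = k + 1 - (i - j) := by omega
      rw [e1]
    · refine Finset.sum_congr rfl (fun i _ => ?_)
      rw [FXY_mapDomain (g' := ((k+1) :: ·)) (fun v => by rw [fromXY_block])]
  · rw [FXY_mapDomain (g' := (k :: ·))
      (fun v => by rw [fromXY_block, Nat.sub_add_cancel hk])]

lemma prep_def (k : ℕ) (X : H) : Finsupp.mapDomain (k :: ·) X = prep k X := by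
  simp [prep]

lemma shmulW_nil_one : shmulW [] [1] = Finsupp.single [1] 1 := by
  unfold shmulW
  rw [toXY_one, show toXY [] = [] from rfl, shW, Finsupp.mapDomain_single]
  rfl

lemma shmulW_nil_two : shmulW [] [2] = Finsupp.single [2] 1 := by
  unfold shmulW
  rw [toXY_two, show toXY [] = [] from rfl, shW, Finsupp.mapDomain_single]
  rfl

lemma Z3 : ∀ (t : List ℕ), (∀ m ∈ t, 2 ≤ m) →
    shmulW t [1] - (Finsupp.single (1::t) (1:ℚ) +
      ∑ j ∈ Finset.range t.length,
        (2:ℚ) • Finsupp.single (t.take (j+1) ++ 1 :: t.drop (j+1)) (1:ℚ)) ∈ M2 := by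
  intro t
  induction t with
  | nil =>
    intro _
    rw [shmulW_nil_one]
    simp only [List.length_nil, Finset.range_zero, Finset.sum_empty, add_zero, sub_self]
    exact M2.zero_mem
  | cons k t' ih =>
    intro ht
    have hk2 : 2 ≤ k := ht k (List.mem_cons_self)
    have ht' : ∀ m ∈ t', 2 ≤ m := fun m hm => ht m (List.mem_cons_of_mem _ hm)
    have ht1' : ∀ m ∈ t', 1 ≤ m := fun m hm => le_trans one_le_two (ht' m hm)
    obtain ⟨m, rfl⟩ : ∃ m, k = m + 2 := ⟨k - 2, by omega⟩
    have hY := ih ht'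
    set Y := shmulW t' [1] - (Finsupp.single (1::t') (1:ℚ) +
      ∑ j ∈ Finset.range t'.length,
        (2:ℚ) • Finsupp.single (t'.take (j+1) ++ 1 :: t'.drop (j+1)) (1:ℚ)) with hYdef
    have hS : shmulW t' [1] = Y + (Finsupp.single (1::t') (1:ℚ) +
      ∑ j ∈ Finset.range t'.length,
        (2:ℚ) • Finsupp.single (t'.take (j+1) ++ 1 :: t'.drop (j+1)) (1:ℚ)) := by
      rw [hYdef]; abel
    have key : shmulW ((m+2)::t') [1] - (Finsupp.single (1::(m+2)::t') (1:ℚ) +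
        ∑ j ∈ Finset.range (((m+2)::t').length),
          (2:ℚ) • Finsupp.single (((m+2)::t').take (j+1) ++ 1 :: ((m+2)::t').drop (j+1)) (1:ℚ))
        = (∑ j ∈ Finset.range m, Finsupp.single ((j+1+1) :: (m+2-(j+1)) :: t') (1:ℚ))
          + prep (m+2) Y := by
      rw [Zlem1 (m+2) (by omega) t' ht1', prep_def, hS, map_add, map_add, map_sum,
        prep_single, Finset.sum_range_succ, Finset.sum_range_succ']
      rw [show (∑ j ∈ Finset.range t'.length,
          prep (m+2) ((2:ℚ) • Finsupp.single (t'.take (j+1) ++ 1 :: t'.drop (j+1)) (1:ℚ)))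
        = ∑ j ∈ Finset.range t'.length,
          (2:ℚ) • Finsupp.single ((m+2) :: (t'.take (j+1) ++ 1 :: t'.drop (j+1))) (1:ℚ) from
        Finset.sum_congr rfl (fun j hj => by rw [map_smul, prep_single])]
      rw [List.length_cons, Finset.sum_range_succ']
      rw [show (∑ j ∈ Finset.range t'.length,
          (2:ℚ) • Finsupp.single (((m+2)::t').take (j+1+1) ++ 1 :: ((m+2)::t').drop (j+1+1)) (1:ℚ))
        = ∑ j ∈ Finset.range t'.length,
          (2:ℚ) • Finsupp.single ((m+2) :: (t'.take (j+1) ++ 1 :: t'.drop (j+1))) (1:ℚ) from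
        Finset.sum_congr rfl (fun j hj => by
          rw [List.take_succ_cons, List.drop_succ_cons, List.cons_append])]
      rw [show (((m+2)::t').take (0+1) ++ 1 :: ((m+2)::t').drop (0+1)) = (m+2) :: 1 :: t' from by
        simp]
      rw [show (0+1 : ℕ) = 1 from rfl, show (m+2-0) = m+2 from rfl,
        show m+1+1 = m+2 from rfl, show m+2-(m+1) = 1 by omega]
      simp only [two_smul]
      abel
    rw [key]
    refine Submodule.add_mem M2 ?_ (prep_mem_M2 (by omega) hY)
    refine Submodule.sum_mem M2 (fun j hj => ?_)
    have hj' := Finset.mem_range.1 hj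
    refine single_mem_M2 ?_ 1
    intro x hx
    rcases List.mem_cons.1 hx with rfl | hx
    · omega
    rcases List.mem_cons.1 hx with rfl | hx
    · omega
    · exact ht' x hx

def TT (l : List ℕ) : H :=
  ∑ i ∈ Finset.range l.length, ∑ j ∈ Finset.range (l.length - i),
    ((2 * l.getD i 0 : ℕ) : ℚ) •
      zw (l.take i ++ (l.getD i 0 + 1) ::
        ((l.drop (i+1)).take j ++ 1 :: (l.drop (i+1)).drop j))

lemma TT_cons (k : ℕ) (t : List ℕ) :
    TT (k :: t) = (∑ j ∈ Finset.range (t.length + 1),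
        ((2 * k : ℕ) : ℚ) • zw ((k+1) :: (t.take j ++ 1 :: t.drop j)))
      + prep k (TT t) := by
  unfold TT
  rw [List.length_cons, Finset.sum_range_succ']
  simp only [List.getD_cons_zero, List.getD_cons_succ, List.take_succ_cons, List.take_zero,
    List.drop_succ_cons, List.nil_append, Nat.sub_zero, Nat.succ_sub_succ_eq_sub, zero_add,
    List.cons_append]
  rw [add_comm]
  congr 1
  rw [map_sum]
  refine Finset.sum_congr rfl fun i _ => ?_
  rw [map_sum]
  refine Finset.sum_congr rfl fun j _ => ?_
  rw [map_smul]
  simp only [zw]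
  rw [prep_single]

lemma ML : ∀ (t : List ℕ), (∀ m ∈ t, 2 ≤ m) → shmulW t [2] - TT t ∈ M2 := by
  intro t
  induction t with
  | nil =>
    intro _
    rw [shmulW_nil_two]
    unfold TT
    simp only [List.length_nil, Finset.range_zero, Finset.sum_empty, sub_zero]
    refine single_mem_M2 ?_ 1
    intro x hx
    simp only [List.mem_singleton] at hx
    omega
  | cons k t' ih =>
    intro ht
    have hk2 : 2 ≤ k := ht k (List.mem_cons_self)
    have ht' : ∀ m ∈ t', 2 ≤ m := fun m hm => ht m (List.mem_cons_of_mem _ hm)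
    have ht1' : ∀ m ∈ t', 1 ≤ m := fun m hm => le_trans one_le_two (ht' m hm)
    have hY1 := Z3 t' ht'
    have hY2 := ih ht'
    set Y1 := shmulW t' [1] - (Finsupp.single (1::t') (1:ℚ) +
      ∑ j ∈ Finset.range t'.length,
        (2:ℚ) • Finsupp.single (t'.take (j+1) ++ 1 :: t'.drop (j+1)) (1:ℚ)) with hY1def
    set Y2 := shmulW t' [2] - TT t' with hY2def
    have e1 : shmulW t' [1] = Y1 + (Finsupp.single (1::t') (1:ℚ) +
        (2:ℚ) • ∑ j ∈ Finset.range t'.length,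
          Finsupp.single (t'.take (j+1) ++ 1 :: t'.drop (j+1)) (1:ℚ)) := by
      rw [hY1def, Finset.smul_sum]; abel
    have e2 : shmulW t' [2] = Y2 + TT t' := by rw [hY2def]; abel
    have hdbl : (∑ i ∈ Finset.range k, ∑ j ∈ Finset.range (i+1),
        Finsupp.single ((k+1-(i-j)) :: (i-j+1) :: t') (1:ℚ))
        = (∑ i ∈ Finset.range k, ∑ j ∈ Finset.range i,
            Finsupp.single ((k+1-(i-j)) :: (i-j+1) :: t') (1:ℚ))
          + (k:ℚ) • Finsupp.single ((k+1) :: 1 :: t') (1:ℚ) := by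
      rw [Finset.sum_congr rfl (fun i (_ : i ∈ Finset.range k) => Finset.sum_range_succ
        (fun j => Finsupp.single ((k+1-(i-j)) :: (i-j+1) :: t') (1:ℚ)) i)]
      rw [Finset.sum_add_distrib]
      congr 1
      simp only [Nat.sub_self, Nat.sub_zero, zero_add]
      rw [Finset.sum_const, Finset.card_range, ← Nat.cast_smul_eq_nsmul ℚ]
    have key : shmulW (k::t') [2] - TT (k::t') =
        (∑ i ∈ Finset.range k, ∑ j ∈ Finset.range i,
          Finsupp.single ((k+1-(i-j)) :: (i-j+1) :: t') (1:ℚ))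
        + ((k:ℚ) • prep (k+1) Y1 + prep k Y2) := by
      rw [Zlem2 k (by omega) t' ht1', TT_cons, hdbl, e1, e2]
      simp only [prep_def]
      rw [Finset.sum_const, Finset.card_range, ← Nat.cast_smul_eq_nsmul ℚ]
      rw [map_add, map_add, map_smul, prep_single, map_add]
      rw [show prep (k+1) (∑ j ∈ Finset.range t'.length,
          Finsupp.single (t'.take (j+1) ++ 1 :: t'.drop (j+1)) (1:ℚ))
        = ∑ j ∈ Finset.range t'.length,
          Finsupp.single ((k+1) :: (t'.take (j+1) ++ 1 :: t'.drop (j+1))) (1:ℚ) from by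
        rw [map_sum]; exact Finset.sum_congr rfl fun j _ => prep_single _ _ _]
      rw [Finset.sum_range_succ']
      simp only [zw, List.take_zero, List.drop_zero, List.nil_append]
      rw [show (∑ j ∈ Finset.range t'.length,
          ((2 * k : ℕ) : ℚ) • Finsupp.single ((k+1) :: (t'.take (j+1) ++ 1 :: t'.drop (j+1))) (1:ℚ))
        = ((2 * k : ℕ) : ℚ) • ∑ j ∈ Finset.range t'.length,
          Finsupp.single ((k+1) :: (t'.take (j+1) ++ 1 :: t'.drop (j+1))) (1:ℚ) from by
        rw [Finset.smul_sum]]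
      push_cast
      module
    rw [key]
    refine Submodule.add_mem M2 ?_ (Submodule.add_mem M2
      (Submodule.smul_mem M2 _ (prep_mem_M2 (by omega) hY1))
      (prep_mem_M2 hk2 hY2))
    refine Submodule.sum_mem M2 fun i hi => Submodule.sum_mem M2 fun j hj => ?_
    have hi' := Finset.mem_range.1 hi
    have hj' := Finset.mem_range.1 hj
    refine single_mem_M2 ?_ 1
    intro x hx
    rcases List.mem_cons.1 hx with rfl | hx
    · omega
    rcases List.mem_cons.1 hx with rfl | hx
    · omega
    · exact ht' x hx

/-- for `k₁, …, k_r ≥ 2`, the shuffle product `z_{k₁}⋯z_{k_r} ⧢ z₂` is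
congruent, modulo `𝔥^{≥2}`, to `Σ_{1≤i≤j≤r} 2k_i · z_{k₁}⋯z_{k_i+1}⋯z_{k_j} z₁ z_{k_{j+1}}⋯z_{k_r}`. -/
theorem stmt2 (l : List ℕ) (hr : 1 ≤ l.length) (hl : ∀ k ∈ l, 2 ≤ k) :
    isH2 (shmul (zw l) (zw [2]) -
      ∑ i ∈ Finset.Icc 1 l.length, ∑ j ∈ Finset.Icc i l.length,
        ((2 * l.getD (i - 1) 0 : ℕ) : ℚ) •
          zw (l.take (i - 1) ++ (l.getD (i - 1) 0 + 1) ::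
            (((l.drop i).take (j - i)) ++ 1 :: l.drop j))) := by
  have hsh : shmul (zw l) (zw [2]) = shmulW l [2] := by
    simp [shmul, zw, Finsupp.sum_single_index]
  have hconv : (∑ i ∈ Finset.Icc 1 l.length, ∑ j ∈ Finset.Icc i l.length,
      ((2 * l.getD (i - 1) 0 : ℕ) : ℚ) •
        zw (l.take (i - 1) ++ (l.getD (i - 1) 0 + 1) ::
          (((l.drop i).take (j - i)) ++ 1 :: l.drop j))) = TT l := by
    unfold TT
    rw [← Finset.Ico_add_one_right_eq_Icc, Finset.sum_Ico_eq_sum_range]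
    rw [show l.length + 1 - 1 = l.length from by omega]
    refine Finset.sum_congr rfl fun i hi => ?_
    rw [← Finset.Ico_add_one_right_eq_Icc, Finset.sum_Ico_eq_sum_range]
    rw [show l.length + 1 - (1 + i) = l.length - i from by omega]
    refine Finset.sum_congr rfl fun j hj => ?_
    have e1 : 1 + i - 1 = i := by omega
    have e2 : 1 + i + j - (1 + i) = j := by omega
    have e3 : 1 + i = i + 1 := by omega
    rw [e1, e2, e3, List.drop_drop]
  rw [hsh, hconv]
  exact ML l hl
end
end

section
/- Let R be a ℚ-algebra and, for each integer m > 0, let f(m) : 𝔥¹_* → R be a ℚ-algebra homomorphism with respect to the harmonic product, written f_w(m) := f(m)(w). Fix an integer M > 0 and define the ℚ-linear map F(M) : 𝔥¹ → R by F_1(M) := 1 and, for a nonempty word w, F_w(M) := Σ_{w = w₁⋯w_s} Σ_{M > m₁ > ⋯ > m_s > 0} f_{w₁}(m₁)⋯f_{w_s}(m_s), the outer sum running over all decompositions of w as a concatenation of nonempty words w₁, …, w_s (1 ≤ s ≤ depth of w). Then w ↦ F_w(M) is a ℚ-algebra homomorphism 𝔥¹_* → R, i.e. F_{u*v}(M)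 = F_u(M)·F_v(M) for all u, v ∈ 𝔥¹. -/
open scoped Classical BigOperators

noncomputable section

section AuxQuasi
set_option linter.unusedSectionVars false
set_option maxHeartbeats 1000000

variable {R : Type*} [CommRing R] [Algebra ℚ R]

lemma hmulW_nil_left (v : List ℕ) : hmulW [] v = Finsupp.single v 1 := by rw [hmulW]
lemma hmulW_nil_right (w : List ℕ) : hmulW w [] = Finsupp.single w 1 := by cases w <;> rw [hmulW]
lemma hmulW_cons_cons (k l : ℕ) (u v : List ℕ) : hmulW (k::u) (l::v) =
      Finsupp.mapDomain (k :: ·) (hmulW u (l :: v)) +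
      Finsupp.mapDomain (l :: ·) (hmulW (k :: u) v) +
      Finsupp.mapDomain ((k + l) :: ·) (hmulW u v) := by rw [hmulW]

variable {R : Type*} [CommRing R] [Algebra ℚ R]

def lext (φ : List ℕ → R) (w : H) : R := w.sum fun l c => c • φ l

lemma lext_single (φ : List ℕ → R) (a : List ℕ) (c : ℚ) :
    lext φ (Finsupp.single a c) = c • φ a := by
  simp [lext, Finsupp.sum_single_index]

lemma lext_zw (φ : List ℕ → R) (a : List ℕ) : lext φ (zw a) = φ a := by
  simp [zw, lext_single]

lemma lext_add (φ : List ℕ → R) (x y : H) : lext φ (x + y) = lext φ x + lext φ y := by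
  simp [lext, Finsupp.sum_add_index', add_smul]

lemma lext_mapDomain (φ : List ℕ → R) (g : List ℕ → List ℕ) (w : H) :
    lext φ (Finsupp.mapDomain g w) = lext (fun l => φ (g l)) w := by
  simp only [lext]
  exact Finsupp.sum_mapDomain_index (by simp) (by simp [add_smul])

lemma lext_funadd (φ ψ : List ℕ → R) (w : H) :
    lext (fun l => φ l + ψ l) w = lext φ w + lext ψ w := by
  simp [lext, smul_add, Finsupp.sum_add]

lemma lext_funmul (c : R) (φ : List ℕ → R) (w : H) :
    lext (fun l => c * φ l) w = c * lext φ w := by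
  simp only [lext, Finsupp.sum, Finset.mul_sum, mul_smul_comm]

lemma lext_congrfun (φ ψ : List ℕ → R) (h : ∀ l, φ l = ψ l) (w : H) :
    lext φ w = lext ψ w := by simp only [lext, h]

lemma lext_linmap (φ : H →ₗ[ℚ] R) (w : H) : lext (fun l => φ (zw l)) w = φ w := by
  conv_rhs => rw [← Finsupp.sum_single w]
  rw [map_finsuppSum, lext]
  refine Finset.sum_congr rfl fun a _ => ?_
  show (w a) • φ (zw a) = φ (Finsupp.single a (w a))
  rw [← map_smul]
  congr 1
  simp [zw, Finsupp.smul_single]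

def cutc (g h : List ℕ → R) (l : List ℕ) : R :=
  ∑ t ∈ Finset.range (l.length + 1), g (l.take t) * h (l.drop t)

lemma cutc_nil (g h : List ℕ → R) : cutc g h [] = g [] * h [] := by simp [cutc]

lemma cutc_cons (g h : List ℕ → R) (m : ℕ) (w : List ℕ) :
    cutc g h (m :: w) = g [] * h (m :: w) + cutc (fun t => g (m :: t)) h w := by
  rw [cutc, show (m::w).length + 1 = (w.length + 1) + 1 from rfl, Finset.sum_range_succ']
  simp [cutc, List.take_succ_cons, List.drop_succ_cons, add_comm]

lemma key : ∀ (N : ℕ) (g h : List ℕ → R) (a b : List ℕ), a.length + b.length ≤ N →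
    lext (cutc g h) (hmulW a b) =
      ∑ i ∈ Finset.range (a.length + 1), ∑ j ∈ Finset.range (b.length + 1),
        lext g (hmulW (a.take i) (b.take j)) * lext h (hmulW (a.drop i) (b.drop j)) := by
  intro N
  induction N with
  | zero =>
    intro g h a b hab
    have ha : a = [] := by cases a <;> simp_all
    have hb : b = [] := by cases b <;> simp_all
    subst ha; subst hb
    simp [hmulW_nil_left, lext_single, cutc]
  | succ N IH =>
    intro g h a b hab
    match a, b with
    | [], b =>
      rw [hmulW_nil_left, lext_single, one_smul,
        show ([] : List ℕ).length + 1 = 1 from rfl, Finset.sum_range_one, cutc]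
      refine Finset.sum_congr rfl fun j _ => ?_
      simp only [List.take_nil, List.drop_nil, hmulW_nil_left, lext_single, one_smul]
    | k :: u, [] =>
      rw [hmulW_nil_right, lext_single, one_smul, cutc]
      refine Finset.sum_congr rfl fun i _ => ?_
      rw [show ([] : List ℕ).length + 1 = 1 from rfl, Finset.sum_range_one]
      simp only [List.take_nil, List.drop_nil, hmulW_nil_right, lext_single, one_smul]
    | k :: u, l :: v =>
      have hab1 : u.length + (l :: v).length ≤ N := by
        simp only [List.length_cons] at hab ⊢; omega
      have hab2 : (k :: u).length + v.length ≤ N := by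
        simp only [List.length_cons] at hab ⊢; omega
      have hab3 : u.length + v.length ≤ N := by
        simp only [List.length_cons] at hab ⊢; omega
      have step : ∀ (m : ℕ) (W : H), lext (fun w => cutc g h (m :: w)) W
          = g [] * lext (fun w => h (m :: w)) W + lext (cutc (fun t => g (m :: t)) h) W := by
        intro m W
        rw [lext_congrfun _ _ (fun w => cutc_cons g h m w), lext_funadd, lext_funmul]
      -- LHS expansion
      rw [hmulW_cons_cons, lext_add, lext_add, lext_mapDomain, lext_mapDomain, lext_mapDomain]
      rw [step, step, step]
      rw [IH _ h u (l :: v) hab1, IH _ h (k :: u) v hab2, IH _ h u v hab3]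
      simp only [List.length_cons]
      simp_rw [Finset.sum_range_succ']
      simp only [List.take_succ_cons, List.drop_succ_cons, List.take_zero, List.drop_zero,
        List.take_nil, List.drop_nil, hmulW_nil_left, hmulW_nil_right, lext_single, one_smul,
        hmulW_cons_cons, lext_add, lext_mapDomain, add_mul, mul_add, Finset.sum_add_distrib]
      abel

lemma cutc_mult (g h : List ℕ → R)
    (hg : ∀ a b, lext g (hmulW a b) = g a * g b)
    (hh : ∀ a b, lext h (hmulW a b) = h a * h b)
    (a b : List ℕ) :
    lext (cutc g h) (hmulW a b) = cutc g h a * cutc g h b := by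
  rw [key (a.length + b.length) g h a b le_rfl, cutc, cutc, Finset.sum_mul_sum]
  refine Finset.sum_congr rfl fun i _ => Finset.sum_congr rfl fun j _ => ?_
  rw [hg, hh]; ring

lemma lext_zero (φ : List ℕ → R) : lext φ 0 = 0 := by simp [lext]

lemma lext_finsetsum {ι : Type*} (s : Finset ι) (F : ι → H) (φ : List ℕ → R) :
    lext φ (∑ i ∈ s, F i) = ∑ i ∈ s, lext φ (F i) :=
  map_sum (AddMonoidHom.mk' (lext φ) (lext_add φ)) F s

lemma lext_smul (c : ℚ) (φ : List ℕ → R) (w : H) : lext φ (c • w) = c • lext φ w := by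
  rw [lext, Finsupp.sum_smul_index (by simp)]
  simp [mul_smul, lext, Finsupp.sum, Finset.smul_sum]

lemma mult_lift (φ : List ℕ → R) (hφ : ∀ a b, lext φ (hmulW a b) = φ a * φ b) (u v : H) :
    lext φ (hmul u v) = lext φ u * lext φ v := by
  rw [hmul, Finsupp.sum, lext_finsetsum]
  rw [show lext φ u * lext φ v = ∑ a ∈ u.support, ∑ b ∈ v.support, (u a • φ a) * (v b • φ b) by
    rw [lext, lext, Finsupp.sum, Finsupp.sum, Finset.sum_mul_sum]]
  refine Finset.sum_congr rfl fun a _ => ?_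
  rw [Finsupp.sum, lext_finsetsum]
  refine Finset.sum_congr rfl fun b _ => ?_
  rw [lext_smul, hφ, smul_mul_smul_comm]

lemma hmul_zw (a b : List ℕ) : hmul (zw a) (zw b) = hmulW a b := by
  rw [hmul, zw, zw, Finsupp.sum_single_index (by simp [Finsupp.sum_single_index]),
    Finsupp.sum_single_index (by simp)]
  simp

def GG (f : ℕ → H →ₗ[ℚ] R) : ℕ → List ℕ → R
  | _, [] => 1
  | M, k :: t => ∑ m ∈ (Finset.Ioo 0 M).attach,
      ∑ i ∈ Finset.range (t.length + 1),
        f m.1 (zw (k :: t.take i)) * GG f m.1 (t.drop i)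
  termination_by M _ => M
  decreasing_by exact (Finset.mem_Ioo.mp m.2).2

variable (f : ℕ → H →ₗ[ℚ] R)

lemma GG_nil (M : ℕ) : GG f M [] = 1 := by rw [GG]

lemma GG_cons (M k : ℕ) (t : List ℕ) : GG f M (k :: t) =
    ∑ m ∈ Finset.Ioo 0 M, ∑ i ∈ Finset.range (t.length + 1),
      f m (zw (k :: t.take i)) * GG f m (t.drop i) := by
  rw [GG, ← Finset.sum_attach (Finset.Ioo 0 M)
    (fun m => ∑ i ∈ Finset.range (t.length + 1), f m (zw (k :: t.take i)) * GG f m (t.drop i))]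

def epsf : List ℕ → R := fun l => if l = [] then 1 else 0

lemma GG_le_one (M : ℕ) (hM : M ≤ 1) (l : List ℕ) : GG f M l = epsf l := by
  cases l with
  | nil => rw [GG_nil]; rfl
  | cons k t =>
    rw [GG_cons, show Finset.Ioo 0 M = ∅ by
      refine Finset.eq_empty_iff_forall_notMem.mpr fun x hx => ?_
      rw [Finset.mem_Ioo] at hx; omega]
    simp [epsf]

lemma eps_mult (a b : List ℕ) : lext (epsf : List ℕ → R) (hmulW a b) = epsf a * epsf b := by
  match a, b with
  | [], b => rw [hmulW_nil_left, lext_single, one_smul, show (epsf [] : R) = 1 from rfl, one_mul]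
  | k :: u, [] =>
    rw [hmulW_nil_right, lext_single, one_smul, show (epsf [] : R) = 1 from rfl, mul_one]
  | k :: u, l :: v =>
    have hz : ∀ (m : ℕ) (W : H), lext (fun w => (epsf (m :: w) : R)) W = 0 := by
      intro m W
      rw [lext_congrfun _ (fun _ => (0:R)) (fun w => by simp [epsf]), ← lext_zero (fun _ => (0:R)) ]
      simp [lext]
    rw [hmulW_cons_cons, lext_add, lext_add, lext_mapDomain, lext_mapDomain, lext_mapDomain,
      hz, hz, hz, show (epsf (k :: u) : R) = 0 by simp [epsf]]
    ring

lemma GG_succ (M : ℕ) (hM : 1 ≤ M) (hfM1 : f M (zw []) = 1) (l : List ℕ) :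
    GG f (M + 1) l = cutc (fun w => f M (zw w)) (GG f M) l := by
  cases l with
  | nil => rw [GG_nil, cutc_nil, GG_nil, hfM1, one_mul]
  | cons k t =>
    have hins : Finset.Ioo 0 (M + 1) = insert M (Finset.Ioo 0 M) := by
      ext x; simp [Finset.mem_Ioo, Finset.mem_insert]; omega
    rw [GG_cons, hins, Finset.sum_insert (by simp), cutc_cons, hfM1, one_mul, ← GG_cons]
    rw [show cutc (fun t_1 => f M (zw (k :: t_1))) (GG f M) t =
      ∑ i ∈ Finset.range (t.length + 1), f M (zw (k :: t.take i)) * GG f M (t.drop i) from rfl]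
    exact add_comm _ _

lemma GG_mult (hf1 : ∀ m : ℕ, 0 < m → f m (zw []) = 1)
    (hfmul : ∀ m : ℕ, 0 < m → ∀ u v : H, f m (hmul u v) = f m u * f m v) :
    ∀ (M : ℕ) (a b : List ℕ), lext (GG f M) (hmulW a b) = GG f M a * GG f M b := by
  intro M
  induction M with
  | zero =>
    intro a b
    rw [lext_congrfun _ epsf (GG_le_one f 0 (by omega)), GG_le_one f 0 (by omega),
      GG_le_one f 0 (by omega), eps_mult]
  | succ M IH =>
    intro a b
    rcases Nat.eq_zero_or_pos M with hM | hM
    · subst hM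
      rw [lext_congrfun _ epsf (GG_le_one f 1 (by omega)), GG_le_one f 1 (by omega),
        GG_le_one f 1 (by omega), eps_mult]
    · have hfz : ∀ a b : List ℕ,
          lext (fun w => f M (zw w)) (hmulW a b) = f M (zw a) * f M (zw b) := by
        intro a b
        rw [lext_linmap, ← hmul_zw, hfmul M hM]
      rw [lext_congrfun _ _ (GG_succ f M hM (hf1 M hM)), GG_succ f M hM (hf1 M hM),
        GG_succ f M hM (hf1 M hM), cutc_mult _ _ hfz IH]

instance : Unique (Composition 0) := by
  refine ⟨⟨⟨[], by simp, by simp⟩⟩, fun c => ?_⟩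
  rcases c with ⟨bl, hpos, hsum⟩
  cases bl with
  | nil => rfl
  | cons b bs =>
    exfalso
    have := hpos List.mem_cons_self
    simp at hsum
    omega

lemma Fword_formula (f : ℕ → H →ₗ[ℚ] R) (M : ℕ) (l : List ℕ) :
    Fword f M l = ∑ c : Composition l.length,
      ∑ m ∈ (Fintype.piFinset fun _ : Fin c.length => Finset.Ioo 0 M).filter
          (fun m => StrictAnti m),
        ∏ i : Fin c.length, f (m i) (zw ((l.splitWrtComposition c).getD (i : ℕ) [])) := by
  rcases eq_or_ne l [] with rfl | hl
  · rw [Fword, if_pos rfl]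
    simp only [List.length_nil]
    rw [Fintype.sum_unique]
    have h0 : (default : Composition 0).length = 0 := rfl
    have hS : ((Fintype.piFinset fun _ : Fin (default : Composition 0).length =>
        Finset.Ioo 0 M).filter (fun m => StrictAnti m)) =
        {(fun _ => 0 : Fin (default : Composition 0).length → ℕ)} := by
      ext g
      simp only [Finset.mem_filter, Fintype.mem_piFinset, Finset.mem_singleton]
      constructor
      · intro _; funext i; exact (Fin.cast h0 i).elim0
      · intro _
        exact ⟨fun i => (Fin.cast h0 i).elim0,
          fun a _ h => absurd h (by exact (Fin.cast h0 a).elim0)⟩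
    erw [hS, Finset.sum_singleton, Finset.prod_eq_one (fun i _ => (Fin.cast h0 i).elim0)]
  · rw [Fword, if_neg hl]

lemma sigma_ext_comp {N : ℕ} {c₁ c₂ : Composition N} (h : c₁.blocks = c₂.blocks)
    (m₁ : Fin c₁.length → ℕ) (m₂ : Fin c₂.length → ℕ)
    (hm : ∀ (j : ℕ) (h₁ : j < c₁.length) (h₂ : j < c₂.length), m₁ ⟨j, h₁⟩ = m₂ ⟨j, h₂⟩) :
    (⟨c₁, m₁⟩ : Σ c : Composition N, (Fin c.length → ℕ)) = ⟨c₂, m₂⟩ := by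
  obtain rfl : c₁ = c₂ := Composition.ext h
  have hm2 : m₁ = m₂ := funext fun j => hm j.1 j.2 j.2
  rw [hm2]

lemma Fword_rec (f : ℕ → H →ₗ[ℚ] R) (M k : ℕ) (t : List ℕ) :
    Fword f M (k :: t) = ∑ m₀ ∈ Finset.Ioo 0 M, ∑ i ∈ Finset.range (t.length + 1),
      f m₀ (zw (k :: t.take i)) * Fword f m₀ (t.drop i) := by
  rw [Fword_formula]
  simp only [Fword_formula, Finset.mul_sum]
  simp only [Finset.sum_sigma']
  symm
  refine Finset.sum_bij'
    (fun x hx =>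
      (⟨⟨(x.2.1 + 1) :: x.2.2.1.blocks,
        by
          intro b hb
          rcases List.mem_cons.mp hb with rfl | hb
          · omega
          · exact x.2.2.1.blocks_pos hb,
        by
          have hx2 := (Finset.mem_sigma.mp hx).2
          have hi : x.2.1 ∈ Finset.range (t.length + 1) := (Finset.mem_sigma.mp hx2).1
          rw [Finset.mem_range] at hi
          have hs := x.2.2.1.blocks_sum
          have hdl : (List.drop x.2.1 t).length = t.length - x.2.1 := by simp
          have h3 : ((x.2.1 + 1) :: x.2.2.1.blocks).sum = x.2.1 + 1 + x.2.2.1.blocks.sum :=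
            List.sum_cons
          have h4 : (k :: t).length = t.length + 1 := List.length_cons
          omega⟩,
       Fin.cases (motive := fun _ => ℕ) x.1 x.2.2.2⟩ :
        Σ c : Composition (k :: t).length, (Fin c.length → ℕ)))
    (fun y hy =>
      have hpos : 0 < y.1.length := y.1.length_pos_of_pos (by simp)
      have hne : y.1.blocks ≠ [] := by
        have h1 : y.1.blocks.length = y.1.length := rfl
        intro hcon; rw [hcon] at h1; simp at h1; omega
      ⟨y.2 ⟨0, hpos⟩, ⟨y.1.blocks.head! - 1,
       ⟨⟨y.1.blocks.tail,
         fun {b} hb => y.1.blocks_pos (List.mem_of_mem_tail hb),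
         by
           have hht := List.cons_head!_tail hne
           have hsum := y.1.blocks_sum
           rw [← hht, List.sum_cons] at hsum
           have hhead : 0 < y.1.blocks.head! := y.1.blocks_pos (List.head!_mem_self hne)
           rw [List.length_drop]
           simp only [List.length_cons] at hsum
           omega⟩,
        fun j => y.2 ⟨j.1 + 1, by
          have hht := List.cons_head!_tail hne
          have h5 : y.1.blocks.length = y.1.blocks.tail.length + 1 := by
            conv_lhs => rw [← hht]
            exact List.length_cons
          have hj2 : j.1 < y.1.blocks.tail.length := j.2
          show j.1 + 1 < y.1.length
          have hly : y.1.length = y.1.blocks.length := rfl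
          omega⟩⟩⟩⟩)
    ?_ ?_ ?_ ?_ ?_
  · -- hi : maps into LHS finset
    rintro ⟨m₀, i, c', m'⟩ hx
    simp only [Finset.mem_sigma, Finset.mem_univ, true_and, Finset.mem_filter,
      Fintype.mem_piFinset, Finset.mem_Ioo, Finset.mem_range] at hx ⊢
    obtain ⟨hm₀, hi, hm'⟩ := hx
    obtain ⟨hm'mem, hm'anti⟩ := hm'
    constructor
    · intro idx
      induction idx using Fin.cases with
      | zero => simpa using hm₀
      | succ j =>
        have := hm'mem j
        simp only [Fin.cases_succ]
        omega
    · intro a b hab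
      induction b using Fin.cases with
      | zero => exact absurd hab (Fin.not_lt_zero a)
      | succ jb =>
        induction a using Fin.cases with
        | zero =>
          simp only [Fin.cases_zero, Fin.cases_succ]
          have := hm'mem jb
          omega
        | succ ja =>
          simp only [Fin.cases_succ]
          exact hm'anti (by rwa [← Fin.succ_lt_succ_iff])
  · -- hj : maps into RHS finset
    rintro ⟨c, m⟩ hy
    simp only [Finset.mem_sigma, Finset.mem_univ, true_and, Finset.mem_filter,
      Fintype.mem_piFinset, Finset.mem_Ioo, Finset.mem_range] at hy ⊢
    obtain ⟨hmem, hanti⟩ := hy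
    refine ⟨?_, ?_, ?_, ?_⟩
    · exact hmem _
    · have hne : c.blocks ≠ [] := by
        have h1 : c.blocks.length = c.length := rfl
        have h2 : 0 < c.length := c.length_pos_of_pos (by simp)
        intro hcon; rw [hcon] at h1; simp at h1; omega
      have hht := List.cons_head!_tail hne
      have hsum := c.blocks_sum
      rw [← hht, List.sum_cons] at hsum
      simp only [List.length_cons] at hsum
      omega
    · intro j
      constructor
      · exact (hmem _).1
      · exact hanti (by simp [Fin.mk_lt_mk])
    · intro a b hab
      exact hanti (by simpa [Fin.mk_lt_mk] using hab)
  · -- left inverse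
    rintro ⟨m₀, i, c', m'⟩ hx
    rfl
  · -- right inverse
    rintro ⟨c, m⟩ hy
    apply sigma_ext_comp
    · -- blocks equality
      have hne : c.blocks ≠ [] := by
        have h1 : c.blocks.length = c.length := rfl
        have h2 : 0 < c.length := c.length_pos_of_pos (by simp)
        intro hcon; rw [hcon] at h1; simp at h1; omega
      have hht := List.cons_head!_tail hne
      have hhead : 0 < c.blocks.head! := c.blocks_pos (List.head!_mem_self hne)
      show (c.blocks.head! - 1 + 1) :: c.blocks.tail = c.blocks
      rw [Nat.sub_add_cancel hhead, hht]
    · intro j h₁ h₂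
      rcases j with _ | jj <;> rfl
  · -- summand transfer
    rintro ⟨m₀, i, c', m'⟩ hx
    dsimp only
    refine Eq.trans ?_ (Fin.prod_univ_succ (n := c'.length) _).symm
    simp only [Fin.cases_zero, Fin.cases_succ, Fin.val_succ, Fin.val_zero,
      List.splitWrtComposition, List.splitWrtCompositionAux_cons, List.take_succ_cons,
      List.drop_succ_cons, List.getD_cons_zero, List.getD_cons_succ]


lemma Fword_eq_GG (f : ℕ → H →ₗ[ℚ] R) (M : ℕ) : ∀ l, Fword f M l = GG f M l := by
  induction M using Nat.strong_induction_on with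
  | _ M IH =>
    intro l
    cases l with
    | nil => rw [GG_nil, Fword, if_pos rfl]
    | cons k t =>
      rw [Fword_rec, GG_cons]
      refine Finset.sum_congr rfl fun m₀ hm₀ => Finset.sum_congr rfl fun i _ => ?_
      rw [IH m₀ (Finset.mem_Ioo.mp hm₀).2 (t.drop i)]

end AuxQuasi

/-- if each `f(m) : 𝔥¹_* → R` (`m > 0`) is a ℚ-algebra homomorphism for the
harmonic product, then `w ↦ F_w(M)` is a ℚ-algebra homomorphism `𝔥¹_* → R`. -/
theorem stmt15 {R : Type*} [CommRing R] [Algebra ℚ R]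
    (f : ℕ → H →ₗ[ℚ] R)
    (hf1 : ∀ m : ℕ, 0 < m → f m (zw []) = 1)
    (hfmul : ∀ m : ℕ, 0 < m → ∀ u v : H, f m (hmul u v) = f m u * f m v)
    (M : ℕ) (hM : 0 < M) (u v : H) (hu : isH1 u) (hv : isH1 v) :
    FL f M (hmul u v) = FL f M u * FL f M v := by
  have h1 : ∀ w : H, FL f M w = lext (GG f M) w := by
    intro w
    show lext (Fword f M) w = lext (GG f M) w
    exact lext_congrfun _ _ (fun l => Fword_eq_GG f M l) w
  rw [h1, h1, h1]
  exact mult_lift _ (fun a b => GG_mult f hf1 hfmul M a b) u v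
end
end

section
/- Let R be a ℚ-algebra, let (a_m)_{m>0} be elements of R, and fix an integer M > 0. Define the ℚ-linear map coF(M) : 𝔥¹ → R by coF(M)(1) := 1, coF(M)(z₁^r) := (−1)^r Σ_{M > m₁ ≥ ⋯ ≥ m_r > 0} μ^{m₁,…,m_r} a_{m₁}⋯a_{m_r} for r ≥ 1, where μ^{m₁,…,m_r} := 1/(r₁!⋯r_s!) when the non-increasing sequence (m₁,…,m_r) consists of s distinct values with multiplicities r₁, …, r_s, and coF(M)(w) := 0 for every word w containing a letter z_k with k ≥ 2. Then coF(M) is a ℚ-algebra homomorphism 𝔥¹_* → R, i.e. coF(M)(u*v) = coF(M)(u)·coF(M)(v) for all u, v ∈ 𝔥¹. -/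
open scoped Classical BigOperators

noncomputable section

section Proof16Aux
open Finset

variable {R : Type*} [CommRing R] [Algebra ℚ R]

/-! ### List lemmas -/

private lemma list_length_le_sum : ∀ l : List ℕ, (∀ k ∈ l, 1 ≤ k) → l.length ≤ l.sum
  | [], _ => le_refl 0
  | k :: t, h => by
      have ht := list_length_le_sum t (fun x hx => h x (List.mem_cons_of_mem _ hx))
      have hk := h k List.mem_cons_self
      simp only [List.length_cons, List.sum_cons]
      omega

private lemma list_length_lt_sum : ∀ l : List ℕ, (∀ k ∈ l, 1 ≤ k) → (¬ ∀ k ∈ l, k = 1) →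
    l.length < l.sum
  | [], _, h2 => absurd (by simp) h2
  | k :: t, h, h2 => by
      have hk := h k List.mem_cons_self
      by_cases hk1 : k = 1
      · have h2' : ¬ ∀ x ∈ t, x = 1 := fun hh => h2 (by
          intro x hx
          rcases List.mem_cons.mp hx with rfl | hx
          · exact hk1
          · exact hh x hx)
        have := list_length_lt_sum t (fun x hx => h x (List.mem_cons_of_mem _ hx)) h2'
        simp only [List.length_cons, List.sum_cons]
        omega
      · have ht := list_length_le_sum t (fun x hx => h x (List.mem_cons_of_mem _ hx))
        simp only [List.length_cons, List.sum_cons]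
        omega

private lemma list_sum_ones : ∀ l : List ℕ, (∀ k ∈ l, k = 1) → l.sum = l.length
  | [], _ => rfl
  | k :: t, h => by
      have hk := h k List.mem_cons_self
      have ht := list_sum_ones t (fun x hx => h x (List.mem_cons_of_mem _ hx))
      simp only [List.length_cons, List.sum_cons]
      omega

/-! ### Structural lemmas on `hmulW` -/

private lemma hmulW_support_sum : ∀ (u v : List ℕ), ∀ l ∈ (hmulW u v).support,
    l.sum = u.sum + v.sum
  | [], v, l, hl => by
      rw [hmulW] at hl
      have := Finset.mem_singleton.mp (Finsupp.support_single_subset hl)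
      subst this
      simp
  | k :: u, [], l, hl => by
      rw [hmulW] at hl
      have := Finset.mem_singleton.mp (Finsupp.support_single_subset hl)
      subst this
      simp
  | k :: u, j :: v, l, hl => by
      rw [hmulW] at hl
      rcases Finset.mem_union.mp (Finsupp.support_add hl) with h12 | h3
      · rcases Finset.mem_union.mp (Finsupp.support_add h12) with h1 | h2
        · obtain ⟨l', hl', rfl⟩ := Finset.mem_image.mp (Finsupp.mapDomain_support h1)
          have := hmulW_support_sum u (j :: v) l' hl'
          simp only [List.sum_cons] at this ⊢
          omega
        · obtain ⟨l', hl', rfl⟩ := Finset.mem_image.mp (Finsupp.mapDomain_support h2)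
          have := hmulW_support_sum (k :: u) v l' hl'
          simp only [List.sum_cons] at this ⊢
          omega
      · obtain ⟨l', hl', rfl⟩ := Finset.mem_image.mp (Finsupp.mapDomain_support h3)
        have := hmulW_support_sum u v l' hl'
        simp only [List.sum_cons] at this ⊢
        omega
  termination_by u v => u.length + v.length

private lemma hmulW_support_length : ∀ (u v : List ℕ), ∀ l ∈ (hmulW u v).support,
    l.length ≤ u.length + v.length
  | [], v, l, hl => by
      rw [hmulW] at hl
      have := Finset.mem_singleton.mp (Finsupp.support_single_subset hl)
      subst this
      simp
  | k :: u, [], l, hl => by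
      rw [hmulW] at hl
      have := Finset.mem_singleton.mp (Finsupp.support_single_subset hl)
      subst this
      simp
  | k :: u, j :: v, l, hl => by
      rw [hmulW] at hl
      rcases Finset.mem_union.mp (Finsupp.support_add hl) with h12 | h3
      · rcases Finset.mem_union.mp (Finsupp.support_add h12) with h1 | h2
        · obtain ⟨l', hl', rfl⟩ := Finset.mem_image.mp (Finsupp.mapDomain_support h1)
          have := hmulW_support_length u (j :: v) l' hl'
          simp only [List.length_cons] at this ⊢
          omega
        · obtain ⟨l', hl', rfl⟩ := Finset.mem_image.mp (Finsupp.mapDomain_support h2)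
          have := hmulW_support_length (k :: u) v l' hl'
          simp only [List.length_cons] at this ⊢
          omega
      · obtain ⟨l', hl', rfl⟩ := Finset.mem_image.mp (Finsupp.mapDomain_support h3)
        have := hmulW_support_length u v l' hl'
        simp only [List.length_cons] at this ⊢
        omega
  termination_by u v => u.length + v.length

private lemma hmulW_ones : ∀ r s : ℕ,
    (hmulW (List.replicate r 1) (List.replicate s 1)) (List.replicate (r + s) 1)
      = ((r + s).choose r : ℚ)
  | 0, s => by
      simp [hmulW, Finsupp.single_apply]
  | r + 1, 0 => by
      simp [List.replicate_succ, hmulW, Finsupp.single_apply]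
  | r + 1, s + 1 => by
      have e1 : r + (s + 1) = (r + s) + 1 := by omega
      have e2 : (r + 1) + s = (r + s) + 1 := by omega
      have e3 : (r + 1) + (s + 1) = ((r + s) + 1) + 1 := by omega
      have h1 := hmulW_ones r (s + 1)
      have h2 := hmulW_ones (r + 1) s
      rw [e1] at h1
      rw [e2] at h2
      rw [e3]
      simp only [List.replicate_succ] at h1 h2 ⊢
      rw [hmulW]
      rw [Finsupp.add_apply, Finsupp.add_apply]
      rw [Finsupp.mapDomain_apply List.cons_injective,
          Finsupp.mapDomain_apply List.cons_injective,
          Finsupp.mapDomain_notin_range]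
      · rw [h1, h2, add_zero]
        exact_mod_cast (Nat.choose_succ_succ ((r + s) + 1) r).symm
      · rintro ⟨t, ht⟩
        simp at ht
  termination_by r s => r + s

/-! ### Sorting tuples into antitone order -/

private def sortA {n : ℕ} (f : Fin n → ℕ) : Fin n → ℕ :=
  (f ∘ ⇑(Tuple.sort f)) ∘ Fin.rev

private lemma sortA_antitone {n : ℕ} (f : Fin n → ℕ) : Antitone (sortA f) := by
  intro i j hij
  exact Tuple.monotone_sort f (Fin.rev_le_rev.mpr hij)

private lemma sortA_perm {n : ℕ} (f : Fin n → ℕ) :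
    sortA f = f ∘ ⇑(Fin.revPerm.trans (Tuple.sort f)) := rfl

private lemma sortA_comp_perm {n : ℕ} (f : Fin n → ℕ) (σ : Equiv.Perm (Fin n)) :
    sortA (f ∘ ⇑σ) = sortA f := by
  unfold sortA
  rw [Tuple.comp_perm_comp_sort_eq_comp_sort]

private lemma sortA_eq_self {n : ℕ} {f : Fin n → ℕ} (hf : Antitone f) : sortA f = f := by
  have hmono : Monotone (f ∘ ⇑(Fin.revPerm : Equiv.Perm (Fin n))) := by
    intro i j hij
    exact hf (Fin.rev_le_rev.mpr hij)
  have h1 : f ∘ ⇑(Fin.revPerm : Equiv.Perm (Fin n)) = f ∘ ⇑(Tuple.sort f) :=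
    Tuple.comp_sort_eq_comp_iff_monotone.mpr hmono
  funext i
  have h2 := congrFun h1 i.rev
  simp only [Function.comp_apply, Fin.revPerm_apply, Fin.rev_rev] at h2
  simpa [sortA] using h2.symm

private lemma fiber_card {n M : ℕ} {g : Fin n → ℕ}
    (hg : Antitone g) (hgmem : g ∈ Fintype.piFinset fun _ : Fin n => Ioo 0 M) :
    ((((Fintype.piFinset fun _ : Fin n => Ioo 0 M).filter fun f => sortA f = g).card : ℚ))
      = (n.factorial : ℚ) * muCoeff g := by
  classical
  have himg : ((Fintype.piFinset fun _ : Fin n => Ioo 0 M).filter fun f => sortA f = g)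
      = Finset.image (fun σ : Equiv.Perm (Fin n) => g ∘ ⇑σ) Finset.univ := by
    ext f
    simp only [Finset.mem_filter, Finset.mem_image, Finset.mem_univ, true_and,
      Fintype.mem_piFinset]
    constructor
    · rintro ⟨hmem, hsort⟩
      refine ⟨(Fin.revPerm.trans (Tuple.sort f))⁻¹, ?_⟩
      have hgf : g = f ∘ ⇑(Fin.revPerm.trans (Tuple.sort f)) := hsort ▸ sortA_perm f
      funext x
      have h2 := congrFun hgf ((Fin.revPerm.trans (Tuple.sort f))⁻¹ x)
      simp only [Function.comp_apply, Equiv.Perm.coe_inv, Equiv.apply_symm_apply] at h2 ⊢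
      exact h2
    · rintro ⟨σ, rfl⟩
      refine ⟨fun i => (Fintype.mem_piFinset.mp hgmem) (σ i), ?_⟩
      rw [sortA_comp_perm, sortA_eq_self hg]
  rw [himg]
  have hfib : ∀ f ∈ Finset.image (fun σ : Equiv.Perm (Fin n) => g ∘ ⇑σ) Finset.univ,
      (Finset.univ.filter fun σ : Equiv.Perm (Fin n) => g ∘ ⇑σ = f).card
        = (Finset.univ.filter fun σ : Equiv.Perm (Fin n) => g ∘ ⇑σ = g).card := by
    intro f hf
    obtain ⟨σ₀, -, rfl⟩ := Finset.mem_image.mp hf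
    apply Finset.card_bij (fun σ _ => σ * σ₀⁻¹)
    · intro σ hσ
      rw [Finset.mem_filter] at hσ ⊢
      refine ⟨Finset.mem_univ _, ?_⟩
      funext x
      have h3 := congrFun hσ.2 (σ₀⁻¹ x)
      simpa using h3
    · intro σ hσ τ hτ h
      exact mul_right_cancel h
    · intro τ hτ
      rw [Finset.mem_filter] at hτ
      refine ⟨τ * σ₀, ?_, by group⟩
      rw [Finset.mem_filter]
      refine ⟨Finset.mem_univ _, ?_⟩
      funext x
      have h3 := congrFun hτ.2 (σ₀ x)
      simpa using h3
  have hstab : (Finset.univ.filter fun σ : Equiv.Perm (Fin n) => g ∘ ⇑σ = g).card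
      = ∏ v ∈ Finset.image g Finset.univ,
          ((Finset.univ.filter fun i => g i = v).card).factorial := by
    have h := DomMulAct.stabilizer_card' g
    simp only [Fintype.card_subtype] at h
    exact h
  have hcard : (Finset.image (fun σ : Equiv.Perm (Fin n) => g ∘ ⇑σ) Finset.univ).card
      * ∏ v ∈ Finset.image g Finset.univ,
          ((Finset.univ.filter fun i => g i = v).card).factorial
      = n.factorial := by
    have h0 : (Finset.univ : Finset (Equiv.Perm (Fin n))).card = n.factorial := by
      rw [Finset.card_univ, Fintype.card_perm, Fintype.card_fin]
    calc (Finset.image (fun σ : Equiv.Perm (Fin n) => g ∘ ⇑σ) Finset.univ).card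
        * ∏ v ∈ Finset.image g Finset.univ,
            ((Finset.univ.filter fun i => g i = v).card).factorial
        = ∑ _f ∈ Finset.image (fun σ : Equiv.Perm (Fin n) => g ∘ ⇑σ) Finset.univ,
            ∏ v ∈ Finset.image g Finset.univ,
              ((Finset.univ.filter fun i => g i = v).card).factorial := by
          rw [Finset.sum_const, smul_eq_mul]
      _ = ∑ f ∈ Finset.image (fun σ : Equiv.Perm (Fin n) => g ∘ ⇑σ) Finset.univ,
            (Finset.univ.filter fun σ : Equiv.Perm (Fin n) => g ∘ ⇑σ = f).card := by
          refine Finset.sum_congr rfl fun f hf => ?_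
          rw [hfib f hf, hstab]
      _ = (Finset.univ : Finset (Equiv.Perm (Fin n))).card :=
          (Finset.card_eq_sum_card_image _ _).symm
      _ = n.factorial := h0
  have hprodpos : 0 < ∏ v ∈ Finset.image g Finset.univ,
      ((Finset.univ.filter fun i => g i = v).card).factorial :=
    Finset.prod_pos fun _ _ => Nat.factorial_pos _
  have hne : (∏ v ∈ Finset.image g Finset.univ,
      (((Finset.univ.filter fun i => g i = v).card).factorial : ℚ)) ≠ 0 := by
    rw [← Nat.cast_prod]
    exact_mod_cast hprodpos.ne'
  rw [muCoeff, eq_mul_inv_iff_mul_eq₀ hne, ← Nat.cast_prod]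
  exact_mod_cast hcard

/-! ### The key symmetrization identity -/

private lemma stepA (a : ℕ → R) (M r : ℕ) :
    ∑ m ∈ (Fintype.piFinset fun _ : Fin r => Ioo 0 M).filter (fun m => Antitone m),
        muCoeff m • ∏ i : Fin r, a (m i)
      = ((r.factorial : ℚ))⁻¹ • (∑ x ∈ Ioo 0 M, a x) ^ r := by
  classical
  have hpow : (∑ x ∈ Ioo 0 M, a x) ^ r
      = ∑ f ∈ Fintype.piFinset fun _ : Fin r => Ioo 0 M, ∏ i : Fin r, a (f i) := by
    rw [← Finset.prod_univ_sum]
    simp [Finset.prod_const]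
  have hmaps : ∀ f ∈ Fintype.piFinset fun _ : Fin r => Ioo 0 M,
      sortA f ∈ (Fintype.piFinset fun _ : Fin r => Ioo 0 M).filter (fun m => Antitone m) := by
    intro f hf
    rw [Finset.mem_filter]
    refine ⟨?_, sortA_antitone f⟩
    rw [Fintype.mem_piFinset] at hf ⊢
    intro i
    simp only [sortA, Function.comp_apply]
    exact hf _
  have hsplit : ∑ f ∈ Fintype.piFinset fun _ : Fin r => Ioo 0 M, ∏ i : Fin r, a (f i)
      = ∑ g ∈ (Fintype.piFinset fun _ : Fin r => Ioo 0 M).filter (fun m => Antitone m),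
          ∑ f ∈ (Fintype.piFinset fun _ : Fin r => Ioo 0 M).filter (fun f => sortA f = g),
            ∏ i : Fin r, a (f i) :=
    (Finset.sum_fiberwise_of_maps_to hmaps _).symm
  have hinner : ∀ g ∈ (Fintype.piFinset fun _ : Fin r => Ioo 0 M).filter (fun m => Antitone m),
      (∑ f ∈ (Fintype.piFinset fun _ : Fin r => Ioo 0 M).filter (fun f => sortA f = g),
          ∏ i : Fin r, a (f i))
        = ((r.factorial : ℚ) * muCoeff g) • ∏ i : Fin r, a (g i) := by
    intro g hg
    rw [Finset.mem_filter] at hg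
    have hterm : ∀ f ∈ (Fintype.piFinset fun _ : Fin r => Ioo 0 M).filter
        (fun f => sortA f = g), (∏ i : Fin r, a (f i)) = ∏ i : Fin r, a (g i) := by
      intro f hf
      rw [Finset.mem_filter] at hf
      have hgf : g = f ∘ ⇑(Fin.revPerm.trans (Tuple.sort f)) := hf.2 ▸ sortA_perm f
      rw [hgf]
      simpa [Function.comp] using
        (Equiv.prod_comp (Fin.revPerm.trans (Tuple.sort f)) (fun i => a (f i))).symm
    rw [Finset.sum_congr rfl hterm, Finset.sum_const,
      ← Nat.cast_smul_eq_nsmul ℚ, fiber_card hg.2 hg.1]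
  rw [hpow, hsplit, Finset.sum_congr rfl hinner, Finset.smul_sum]
  refine Finset.sum_congr rfl fun g hg => ?_
  rw [smul_smul, ← mul_assoc, inv_mul_cancel₀ (Nat.cast_ne_zero.mpr r.factorial_ne_zero),
    one_mul]

private lemma coFword_ones (a : ℕ → R) (M : ℕ) {l : List ℕ} (h : ∀ k ∈ l, k = 1) :
    coFword a M l = (-1 : R) ^ l.length *
      (((l.length.factorial : ℚ))⁻¹ • (∑ x ∈ Ioo 0 M, a x) ^ l.length) := by
  rw [coFword, if_pos h, stepA]

private lemma coFword_eq_zero {a : ℕ → R} {M : ℕ} {l : List ℕ} (h : ¬ ∀ k ∈ l, k = 1) :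
    coFword a M l = 0 := if_neg h

private lemma scalar_key (S : R) (r s : ℕ) :
    (((r + s).choose r : ℚ)) • ((-1 : R) ^ (r + s) *
        ((((r + s).factorial : ℚ))⁻¹ • S ^ (r + s)))
      = ((-1 : R) ^ r * (((r.factorial : ℚ))⁻¹ • S ^ r)) *
        ((-1 : R) ^ s * (((s.factorial : ℚ))⁻¹ • S ^ s)) := by
  have hnat : (r + s).choose r * r.factorial * s.factorial = (r + s).factorial := by
    have h := Nat.choose_mul_factorial_mul_factorial (Nat.le_add_right r s)
    simpa using h
  have hkey : ((r + s).choose r : ℚ) * (((r + s).factorial : ℚ))⁻¹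
      = ((r.factorial : ℚ))⁻¹ * ((s.factorial : ℚ))⁻¹ := by
    have hb : ((r + s).factorial : ℚ)
        = ((r + s).choose r : ℚ) * (r.factorial : ℚ) * (s.factorial : ℚ) := by
      exact_mod_cast hnat.symm
    have hr : (r.factorial : ℚ) ≠ 0 := Nat.cast_ne_zero.mpr r.factorial_ne_zero
    have hs : (s.factorial : ℚ) ≠ 0 := Nat.cast_ne_zero.mpr s.factorial_ne_zero
    have hc : ((r + s).choose r : ℚ) ≠ 0 :=
      Nat.cast_ne_zero.mpr (Nat.choose_pos (Nat.le_add_right r s)).ne'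
    rw [hb]
    field_simp
  conv_rhs => rw [mul_mul_mul_comm, ← pow_add, smul_mul_smul_comm, ← pow_add]
  rw [← mul_smul_comm, smul_smul, hkey]

/-! ### The main word-level lemma -/

private lemma coFL_hmulW (a : ℕ → R) (M : ℕ) (x y : List ℕ)
    (hx : ∀ k ∈ x, 1 ≤ k) (hy : ∀ k ∈ y, 1 ≤ k) :
    coFL a M (hmulW x y) = coFword a M x * coFword a M y := by
  classical
  have hcoFL : coFL a M (hmulW x y)
      = ∑ l ∈ (hmulW x y).support, (hmulW x y) l • coFword a M l := rfl
  have h0 : ∀ l ∈ (hmulW x y).support, l ≠ List.replicate (x.sum + y.sum) 1 →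
      (hmulW x y) l • coFword a M l = 0 := by
    intro l hl hne
    by_cases h1 : ∀ k ∈ l, k = 1
    · exfalso
      apply hne
      have hsum := hmulW_support_sum x y l hl
      have hrep : l = List.replicate l.length 1 := List.eq_replicate_of_mem h1
      have hls : l.sum = l.length := list_sum_ones l h1
      rw [hrep]
      congr 1
      omega
    · rw [coFword_eq_zero h1, smul_zero]
  have h1 : List.replicate (x.sum + y.sum) 1 ∉ (hmulW x y).support →
      (hmulW x y) (List.replicate (x.sum + y.sum) 1) •
        coFword a M (List.replicate (x.sum + y.sum) 1) = 0 := by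
    intro h
    rw [Finsupp.notMem_support_iff.mp h, zero_smul]
  rw [hcoFL, Finset.sum_eq_single (List.replicate (x.sum + y.sum) 1) h0 h1]
  by_cases hall : (∀ k ∈ x, k = 1) ∧ (∀ k ∈ y, k = 1)
  · obtain ⟨hx1, hy1⟩ := hall
    have hxr : x = List.replicate x.length 1 := List.eq_replicate_of_mem hx1
    have hyr : y = List.replicate y.length 1 := List.eq_replicate_of_mem hy1
    have hxs : x.sum = x.length := list_sum_ones x hx1
    have hys : y.sum = y.length := list_sum_ones y hy1
    have hval : (hmulW x y) (List.replicate (x.length + y.length) 1)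
        = (((x.length + y.length)).choose x.length : ℚ) := by
      conv_lhs => rw [hxr, hyr]
      simp only [List.length_replicate]
      rw [hmulW_ones]
    rw [hxs, hys, hval]
    rw [coFword_ones a M (fun k hk => List.eq_of_mem_replicate hk),
        coFword_ones a M hx1, coFword_ones a M hy1]
    simp only [List.length_replicate]
    exact scalar_key _ x.length y.length
  · have hrhs : coFword a M x * coFword a M y = 0 := by
      rcases not_and_or.mp hall with h | h
      · rw [coFword_eq_zero h, zero_mul]
      · rw [coFword_eq_zero h, mul_zero]
    rw [hrhs]
    have hnot : List.replicate (x.sum + y.sum) 1 ∉ (hmulW x y).support := by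
      intro hmem
      have hlen := hmulW_support_length x y _ hmem
      have hxle := list_length_le_sum x hx
      have hyle := list_length_le_sum y hy
      rw [List.length_replicate] at hlen
      rcases not_and_or.mp hall with h | h
      · have := list_length_lt_sum x hx h
        omega
      · have := list_length_lt_sum y hy h
        omega
    rw [Finsupp.notMem_support_iff.mp hnot, zero_smul]

end Proof16Aux

/-- `coF(M)` is a ℚ-algebra homomorphism `𝔥¹_* → R`. -/
theorem stmt16 {R : Type*} [CommRing R] [Algebra ℚ R]
    (a : ℕ → R) (M : ℕ) (hM : 0 < M) (u v : H) (hu : isH1 u) (hv : isH1 v) :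
    coFL a M (hmul u v) = coFL a M u * coFL a M v := by
  classical
  have hL : ∀ w : H, coFL a M w = Finsupp.linearCombination ℚ (coFword a M) w := by
    intro w
    rw [coFL, Finsupp.linearCombination_apply]
  have hmul_eq : hmul u v = ∑ p ∈ u.support, ∑ q ∈ v.support,
      (u p * v q) • hmulW p q := rfl
  have hterm : ∀ p ∈ u.support, ∀ q ∈ v.support,
      Finsupp.linearCombination ℚ (coFword a M) (hmulW p q)
        = coFword a M p * coFword a M q := by
    intro p hp q hq
    rw [← hL]
    exact coFL_hmulW a M p q (fun k hk => hu p hp k hk) (fun k hk => hv q hq k hk)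
  rw [hL (hmul u v), hmul_eq, map_sum]
  simp only [map_sum, map_smul]
  rw [Finset.sum_congr rfl fun p hp => Finset.sum_congr rfl fun q hq => by
    rw [hterm p hp q hq]]
  rw [show coFL a M u = ∑ p ∈ u.support, u p • coFword a M p from rfl,
      show coFL a M v = ∑ q ∈ v.support, v q • coFword a M q from rfl,
      Finset.sum_mul_sum]
  exact Finset.sum_congr rfl fun p _ => Finset.sum_congr rfl fun q _ =>
    (smul_mul_smul_comm _ _ _ _).symm
end
end
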